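/- arXiv:1909.12215 — 8 statements merged into one kernel-verified Lean document; each statement's English description precedes it below -/
import Mathlib

section
/- Let β = (B_g, β_g)_{g∈𝒢} be a global action of a groupoid 𝒢 on a ring B (i.e. B_g = B_{t(g)} for all g), and let A ⊆ B be an ideal of B. For each object x set A_x = A ∩ B_x, and for each morphism g set A_g = A_{t(g)} ∩ β_g(A_{s(g)}) and α_g = β_g restricted to A_{g⁻¹}. Then α = (A_g, α_g)_{g∈𝒢} is a partial action of 𝒢 on A. -/
open CategoryTheory

universe u v

def IsIdealIn {A : Type u} [NonUnitalRing A] (S T : Set A) : Prop :=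
  S ⊆ T ∧ (0 : A) ∈ S ∧ (∀ a ∈ S, ∀ b ∈ S, a + b ∈ S) ∧ (∀ a ∈ S, -a ∈ S) ∧
    ∀ t ∈ T, ∀ s ∈ S, t * s ∈ S ∧ s * t ∈ S

/-- A partial action of a groupoid `G` on the (non-unital) ring given by the
subset `S` of the ambient ring `B` (for `S = Set.univ` this is a partial action on `B`
itself).  The fields are axioms (P1)–(P4) of Bagio–Paques. -/
structure PartialActionOn (G : Type v) [Groupoid G] (B : Type u) [NonUnitalRing B]
    (S : Set B) where
  D : ∀ {x y : G}, (x ⟶ y) → Set B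
  act : ∀ {x y : G}, (x ⟶ y) → B → B
  ideal_base : ∀ y : G, IsIdealIn (D (𝟙 y)) S
  ideal_dom : ∀ {x y : G} (g : x ⟶ y), IsIdealIn (D g) (D (𝟙 y))
  act_mem : ∀ {x y : G} (g : x ⟶ y), ∀ a ∈ D (Groupoid.inv g), act g a ∈ D g
  act_add : ∀ {x y : G} (g : x ⟶ y), ∀ a ∈ D (Groupoid.inv g), ∀ b ∈ D (Groupoid.inv g),
    act g (a + b) = act g a + act g b
  act_mul : ∀ {x y : G} (g : x ⟶ y), ∀ a ∈ D (Groupoid.inv g), ∀ b ∈ D (Groupoid.inv g),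
    act g (a * b) = act g a * act g b
  act_inj : ∀ {x y : G} (g : x ⟶ y), ∀ a ∈ D (Groupoid.inv g), ∀ b ∈ D (Groupoid.inv g),
    act g a = act g b → a = b
  act_surj : ∀ {x y : G} (g : x ⟶ y), ∀ c ∈ D g, ∃ a ∈ D (Groupoid.inv g), act g a = c
  act_id : ∀ y : G, ∀ a ∈ D (𝟙 y), act (𝟙 y) a = a
  mem_comp : ∀ {w x y : G} (g : x ⟶ y) (h : w ⟶ x), ∀ a ∈ D (Groupoid.inv h),
    act h a ∈ D (Groupoid.inv g) ∩ D h → a ∈ D (Groupoid.inv (h ≫ g))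
  act_comp : ∀ {w x y : G} (g : x ⟶ y) (h : w ⟶ x), ∀ a ∈ D (Groupoid.inv h),
    act h a ∈ D (Groupoid.inv g) ∩ D h → act g (act h a) = act (h ≫ g) a

/-!
STATEMENT 4: Let β be a global action of 𝒢 on a ring B (global: B_g = B_{t g} for all g)
and A ⊆ B an ideal.  Setting A_y = A ∩ B_y for objects y, A_g = A_{t g} ∩ β_g(A_{s g})
and α_g = β_g|_{A_{g⁻¹}}, the family α = (A_g, α_g) is a partial action of 𝒢 on the
ring A.
-/
theorem extension_partial_actions_stmt4
    {G : Type v} [Groupoid G] {B : Type u} [NonUnitalRing B]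
    (β : PartialActionOn G B Set.univ)
    (hglob : ∀ {x y : G} (g : x ⟶ y), β.D g = β.D (𝟙 y))
    (S : Set B) (hS : IsIdealIn S Set.univ) :
    ∃ α : PartialActionOn G B S,
      (∀ {x y : G} (g : x ⟶ y),
          α.D g = (S ∩ β.D (𝟙 y)) ∩ β.act g '' (S ∩ β.D (𝟙 x))) ∧
      (∀ {x y : G} (g : x ⟶ y), ∀ a ∈ α.D (Groupoid.inv g), α.act g a = β.act g a) := by
  classical
  have hD : ∀ {x y : G} (g : x ⟶ y), β.D (Groupoid.inv g) = β.D (𝟙 x) := fun g => hglob _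
  have h0 : ∀ x : G, (0 : B) ∈ β.D (𝟙 x) := fun x => (β.ideal_base x).2.1
  have h0S : (0 : B) ∈ S := hS.2.1
  have hmem : ∀ {x y : G} (g : x ⟶ y), ∀ a ∈ β.D (𝟙 x), β.act g a ∈ β.D (𝟙 y) := by
    intro x y g a ha
    have := β.act_mem g a (by rw [hD]; exact ha)
    rwa [hglob] at this
  have hadd : ∀ {x y : G} (g : x ⟶ y), ∀ a ∈ β.D (𝟙 x), ∀ b ∈ β.D (𝟙 x),
      β.act g (a + b) = β.act g a + β.act g b := by
    intro x y g a ha b hb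
    exact β.act_add g a (by rw [hD]; exact ha) b (by rw [hD]; exact hb)
  have hmul : ∀ {x y : G} (g : x ⟶ y), ∀ a ∈ β.D (𝟙 x), ∀ b ∈ β.D (𝟙 x),
      β.act g (a * b) = β.act g a * β.act g b := by
    intro x y g a ha b hb
    exact β.act_mul g a (by rw [hD]; exact ha) b (by rw [hD]; exact hb)
  have hcomp : ∀ {w x y : G} (g : x ⟶ y) (h : w ⟶ x), ∀ a ∈ β.D (𝟙 w),
      β.act g (β.act h a) = β.act (h ≫ g) a := by
    intro w x y g h a ha
    refine β.act_comp g h a (by rw [hD]; exact ha) ⟨?_, ?_⟩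
    · rw [hD]; exact hmem h a ha
    · rw [hglob]; exact hmem h a ha
  have hinv : ∀ {x y : G} (g : x ⟶ y), ∀ a ∈ β.D (𝟙 x),
      β.act (Groupoid.inv g) (β.act g a) = a := by
    intro x y g a ha
    rw [hcomp (Groupoid.inv g) g a ha, Groupoid.comp_inv, β.act_id x a ha]
  have hinv' : ∀ {x y : G} (g : x ⟶ y), ∀ b ∈ β.D (𝟙 y),
      β.act g (β.act (Groupoid.inv g) b) = b := by
    intro x y g b hb
    rw [hcomp g (Groupoid.inv g) b hb, Groupoid.inv_comp, β.act_id y b hb]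
  have hact0 : ∀ {x y : G} (g : x ⟶ y), β.act g 0 = 0 := by
    intro x y g
    have h := hadd g 0 (h0 x) 0 (h0 x)
    rw [add_zero] at h
    exact left_eq_add.mp h
  have hneg : ∀ {x y : G} (g : x ⟶ y), ∀ a ∈ β.D (𝟙 x), β.act g (-a) = -β.act g a := by
    intro x y g a ha
    have hn : -a ∈ β.D (𝟙 x) := (β.ideal_base x).2.2.2.1 a ha
    have h := hadd g a ha (-a) hn
    rw [add_neg_cancel, hact0] at h
    exact eq_neg_of_add_eq_zero_right h.symm
  -- the new domains
  have hDid : ∀ y : G,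
      (S ∩ β.D (𝟙 y)) ∩ β.act (𝟙 y) '' (S ∩ β.D (𝟙 y)) = S ∩ β.D (𝟙 y) := by
    intro y
    ext a
    constructor
    · exact fun h => h.1
    · exact fun h => ⟨h, ⟨a, h, β.act_id y a h.2⟩⟩
  have hbase : ∀ y : G, IsIdealIn (S ∩ β.D (𝟙 y)) S := by
    intro y
    refine ⟨Set.inter_subset_left, ⟨h0S, h0 y⟩, ?_, ?_, ?_⟩
    · intro a ha b hb
      exact ⟨hS.2.2.1 a ha.1 b hb.1, (β.ideal_base y).2.2.1 a ha.2 b hb.2⟩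
    · intro a ha
      exact ⟨hS.2.2.2.1 a ha.1, (β.ideal_base y).2.2.2.1 a ha.2⟩
    · intro t ht s hs
      exact ⟨⟨(hS.2.2.2.2 t trivial s hs.1).1, ((β.ideal_base y).2.2.2.2 t trivial s hs.2).1⟩,
        ⟨(hS.2.2.2.2 t trivial s hs.1).2, ((β.ideal_base y).2.2.2.2 t trivial s hs.2).2⟩⟩
  refine ⟨{
    D := fun {x y} g => (S ∩ β.D (𝟙 y)) ∩ β.act g '' (S ∩ β.D (𝟙 x))
    act := fun {x y} g b => β.act g b
    ideal_base := ?_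
    ideal_dom := ?_
    act_mem := ?_
    act_add := ?_
    act_mul := ?_
    act_inj := ?_
    act_surj := ?_
    act_id := ?_
    mem_comp := ?_
    act_comp := ?_ }, fun g => rfl, fun g a _ => rfl⟩
  · -- ideal_base
    intro y
    rw [hDid y]
    exact hbase y
  · -- ideal_dom
    intro x y g
    rw [hDid y]
    refine ⟨fun a ha => ha.1, ⟨⟨h0S, h0 y⟩, ⟨0, ⟨h0S, h0 x⟩, hact0 g⟩⟩, ?_, ?_, ?_⟩
    · rintro a ⟨ha1, a', ha', rfl⟩ b ⟨hb1, b', hb', rfl⟩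
      refine ⟨⟨hS.2.2.1 _ ha1.1 _ hb1.1, (β.ideal_base y).2.2.1 _ ha1.2 _ hb1.2⟩,
        ⟨a' + b', ⟨hS.2.2.1 a' ha'.1 b' hb'.1, (β.ideal_base x).2.2.1 a' ha'.2 b' hb'.2⟩,
          hadd g a' ha'.2 b' hb'.2⟩⟩
    · rintro a ⟨ha1, a', ha', rfl⟩
      exact ⟨⟨hS.2.2.2.1 _ ha1.1, (β.ideal_base y).2.2.2.1 _ ha1.2⟩,
        ⟨-a', ⟨hS.2.2.2.1 a' ha'.1, (β.ideal_base x).2.2.2.1 a' ha'.2⟩, hneg g a' ha'.2⟩⟩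
    · rintro t ht s ⟨hs1, s', hs', rfl⟩
      have htx : β.act (Groupoid.inv g) t ∈ β.D (𝟙 x) := hmem (Groupoid.inv g) t ht.2
      constructor
      · refine ⟨⟨(hS.2.2.2.2 t trivial _ hs1.1).1,
          ((β.ideal_base y).2.2.2.2 t trivial _ hs1.2).1⟩,
          ⟨β.act (Groupoid.inv g) t * s',
            ⟨(hS.2.2.2.2 _ trivial s' hs'.1).1, ((β.ideal_base x).2.2.2.2 _ trivial s' hs'.2).1⟩,
            ?_⟩⟩
        rw [hmul g _ htx s' hs'.2, hinv' g t ht.2]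
      · refine ⟨⟨(hS.2.2.2.2 t trivial _ hs1.1).2,
          ((β.ideal_base y).2.2.2.2 t trivial _ hs1.2).2⟩,
          ⟨s' * β.act (Groupoid.inv g) t,
            ⟨(hS.2.2.2.2 _ trivial s' hs'.1).2, ((β.ideal_base x).2.2.2.2 _ trivial s' hs'.2).2⟩,
            ?_⟩⟩
        rw [hmul g s' hs'.2 _ htx, hinv' g t ht.2]
  · -- act_mem
    intro x y g a ha
    obtain ⟨⟨haS, haD⟩, b, hb, rfl⟩ := ha
    rw [hinv' g b hb.2]
    exact ⟨hb, ⟨β.act (Groupoid.inv g) b, ⟨haS, haD⟩, hinv' g b hb.2⟩⟩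
  · -- act_add
    intro x y g a ha b hb
    exact hadd g a ha.1.2 b hb.1.2
  · -- act_mul
    intro x y g a ha b hb
    exact hmul g a ha.1.2 b hb.1.2
  · -- act_inj
    intro x y g a ha b hb h
    exact β.act_inj g a (by rw [hD]; exact ha.1.2) b (by rw [hD]; exact hb.1.2) h
  · -- act_surj
    rintro x y g c ⟨hc1, a, ha, rfl⟩
    exact ⟨a, ⟨ha, ⟨β.act g a, hc1, hinv g a ha.2⟩⟩, rfl⟩
  · -- act_id
    intro y a ha
    exact β.act_id y a ha.1.2
  · -- mem_comp
    intro w x y g h a ha hmid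
    obtain ⟨⟨hg1, b, hb, hbe⟩, hh⟩ := hmid
    have hb2 : β.act (h ≫ g) a = b := by
      rw [← hcomp g h a ha.1.2, ← hbe, hinv' g b hb.2]
    exact ⟨ha.1, ⟨b, hb, by rw [← hb2, hinv (h ≫ g) a ha.1.2]⟩⟩
  · -- act_comp
    intro w x y g h a ha _
    exact hcomp g h a ha.1.2
end

section
/- A partial action α = (A_g, α_g)_{g∈𝒢} of a groupoid 𝒢 on a ring A is global if and only if A_g = A_{t(g)} for every morphism g ∈ 𝒢. -/
open CategoryTheory

universe u v

structure PartialAction (G : Type v) [Groupoid G] (A : Type u) [NonUnitalRing A] where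
  D : ∀ {x y : G}, (x ⟶ y) → Set A
  act : ∀ {x y : G}, (x ⟶ y) → A → A
  ideal_base : ∀ y : G, IsIdealIn (D (𝟙 y)) Set.univ
  ideal_dom : ∀ {x y : G} (g : x ⟶ y), IsIdealIn (D g) (D (𝟙 y))
  act_mem : ∀ {x y : G} (g : x ⟶ y), ∀ a ∈ D (Groupoid.inv g), act g a ∈ D g
  act_add : ∀ {x y : G} (g : x ⟶ y), ∀ a ∈ D (Groupoid.inv g), ∀ b ∈ D (Groupoid.inv g),
    act g (a + b) = act g a + act g b
  act_mul : ∀ {x y : G} (g : x ⟶ y), ∀ a ∈ D (Groupoid.inv g), ∀ b ∈ D (Groupoid.inv g),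
    act g (a * b) = act g a * act g b
  act_inj : ∀ {x y : G} (g : x ⟶ y), ∀ a ∈ D (Groupoid.inv g), ∀ b ∈ D (Groupoid.inv g),
    act g a = act g b → a = b
  act_surj : ∀ {x y : G} (g : x ⟶ y), ∀ c ∈ D g, ∃ a ∈ D (Groupoid.inv g), act g a = c
  act_id : ∀ y : G, ∀ a ∈ D (𝟙 y), act (𝟙 y) a = a
  mem_comp : ∀ {w x y : G} (g : x ⟶ y) (h : w ⟶ x), ∀ a ∈ D (Groupoid.inv h),
    act h a ∈ D (Groupoid.inv g) ∩ D h → a ∈ D (Groupoid.inv (h ≫ g))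
  act_comp : ∀ {w x y : G} (g : x ⟶ y) (h : w ⟶ x), ∀ a ∈ D (Groupoid.inv h),
    act h a ∈ D (Groupoid.inv g) ∩ D h → act g (act h a) = act (h ≫ g) a

def IsId {G : Type v} [Groupoid G] {y z : G} (g : y ⟶ z) : Prop :=
  ∃ h : y = z, g = eqToHom h

/-!
STATEMENT 5: A partial action α of a groupoid 𝒢 on a ring A is global (i.e. for every
composable pair (g,h) the composite partial bijection α_g ∘ α_h equals α_{gh}, in
particular their domains coincide — the agreement of values on the common domain being
automatic from (P4)) if and only if A_g = A_{t(g)} for every morphism g.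
-/
theorem extension_partial_actions_stmt5
    {G : Type v} [Groupoid G] {A : Type u} [NonUnitalRing A]
    (α : PartialAction G A) :
    (∀ {w x y : G} (g : x ⟶ y) (h : w ⟶ x),
        α.D (Groupoid.inv h) ∩ α.act h ⁻¹' (α.D (Groupoid.inv g) ∩ α.D h)
          = α.D (Groupoid.inv (h ≫ g)))
      ↔ (∀ {x y : G} (g : x ⟶ y), α.D g = α.D (𝟙 y)) := by
  have invinv : ∀ {x y : G} (g : x ⟶ y), Groupoid.inv (Groupoid.inv g) = g := by
    intro x y g
    simp [Groupoid.inv_eq_inv]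
  constructor
  · intro H x y g
    have key : ∀ {x y : G} (g : x ⟶ y), α.D (Groupoid.inv g) = α.D (𝟙 x) := by
      intro x y g
      have h1 := H (Groupoid.inv g) g
      rw [Groupoid.comp_inv] at h1
      have hid : Groupoid.inv (𝟙 x) = 𝟙 x := by simp [Groupoid.inv_eq_inv]
      rw [hid] at h1
      rw [← h1]
      symm
      apply Set.eq_of_subset_of_subset Set.inter_subset_left
      intro a ha
      refine ⟨ha, ?_⟩
      have hm : α.act g a ∈ α.D g := α.act_mem g a ha
      have : α.act g a ∈ α.D (Groupoid.inv (Groupoid.inv g)) := by rwa [invinv]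
      exact ⟨this, hm⟩
    have := key (Groupoid.inv g)
    rwa [invinv] at this
  · intro H w x y g h
    have h1 : α.D (Groupoid.inv h) = α.D (𝟙 w) := H _
    have h2 : α.D (Groupoid.inv g) = α.D (𝟙 x) := H _
    have h3 : α.D h = α.D (𝟙 x) := H _
    have h4 : α.D (Groupoid.inv (h ≫ g)) = α.D (𝟙 w) := H _
    rw [h1, h2, h3, h4]
    apply Set.eq_of_subset_of_subset Set.inter_subset_left
    intro a ha
    refine ⟨ha, ?_⟩
    have : α.act h a ∈ α.D h := α.act_mem h a (by rwa [h1])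
    rw [h3] at this
    exact ⟨this, this⟩
end

section
/- Let 𝒢 be a connected groupoid, x an object, τ(x) = {τ_y ∈ 𝒢(x,y)} a transversal with τ_x = id_x, and α = (A_g, α_g)_{g∈𝒢} a partial action of 𝒢 on a ring A. Set g_x = τ_{t(g)}⁻¹ g τ_{s(g)}. Then the codomain of the composite partial bijection α_{τ_{t(g)}} ∘ α_{g_x} ∘ α_{τ_{s(g)}}⁻¹ equals A_{τ_{t(g)}} ∩ A_g ∩ A_{g τ_{s(g)}}, which is an ideal of A_{t(g)}, for every g ∈ 𝒢. -/
open CategoryTheory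

universe u v

/-!
STATEMENT 6: 𝒢 connected groupoid, x an object, τ(x) a transversal (τ_y ∈ 𝒢(x,y),
τ_x = id_x), α a partial action of 𝒢 on A.  For g : y ⟶ z set
g_x = τ_{t g}⁻¹ ∘ g ∘ τ_{s g} = τ y ≫ g ≫ (τ z)⁻¹.  The codomain of the composite
partial bijection α_{τ_{t g}} ∘ α_{g_x} ∘ α_{τ_{s g}}⁻¹, namely
α_{τ z}(A_{τ z⁻¹} ∩ α_{g_x}(A_{τ y⁻¹} ∩ A_{g_x⁻¹})), equals
A_{τ z} ∩ A_g ∩ A_{g ∘ τ_y}, which is an ideal of A_{t g} = A_z.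
-/

lemma IsIdealIn.inter {A : Type u} [NonUnitalRing A] {S S' T : Set A}
    (h : IsIdealIn S T) (h' : IsIdealIn S' T) : IsIdealIn (S ∩ S') T := by
  obtain ⟨hsub, hz, hadd, hneg, hmul⟩ := h
  obtain ⟨hsub', hz', hadd', hneg', hmul'⟩ := h'
  refine ⟨fun a ha => hsub ha.1, ⟨hz, hz'⟩, ?_, ?_, ?_⟩
  · exact fun a ha b hb => ⟨hadd a ha.1 b hb.1, hadd' a ha.2 b hb.2⟩
  · exact fun a ha => ⟨hneg a ha.1, hneg' a ha.2⟩
  · exact fun t ht s hs =>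
      ⟨⟨(hmul t ht s hs.1).1, (hmul' t ht s hs.2).1⟩,
       ⟨(hmul t ht s hs.1).2, (hmul' t ht s hs.2).2⟩⟩

section PA

variable {G : Type v} [Groupoid G] {A : Type u} [NonUnitalRing A] (α : PartialAction G A)

lemma PartialAction.dom_sub {x y : G} (g : x ⟶ y) : α.D g ⊆ α.D (𝟙 y) :=
  (α.ideal_dom g).1

lemma PartialAction.act_inv_act {x y : G} (g : x ⟶ y) {a : A}
    (ha : a ∈ α.D (Groupoid.inv g)) : α.act (Groupoid.inv g) (α.act g a) = a := by
  have hm := α.act_mem g a ha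
  have hmem : α.act g a ∈ α.D (Groupoid.inv (Groupoid.inv g)) ∩ α.D g := by
    rw [show Groupoid.inv (Groupoid.inv g) = g by simp [Groupoid.inv_eq_inv]]
    exact ⟨hm, hm⟩
  have h1 := α.act_comp (Groupoid.inv g) g a ha hmem
  rw [h1, Groupoid.comp_inv]
  exact α.act_id _ a (α.dom_sub (Groupoid.inv g) ha)

lemma PartialAction.key_sub {w x y : G} (g : x ⟶ y) (h : w ⟶ x) {a : A}
    (ha : a ∈ α.D (Groupoid.inv g) ∩ α.D h) :
    α.act g a ∈ α.D g ∩ α.D (h ≫ g) := by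
  obtain ⟨hag, hah⟩ := ha
  obtain ⟨b, hb, hba⟩ := α.act_surj h a hah
  have hmem : α.act h b ∈ α.D (Groupoid.inv g) ∩ α.D h := by
    rw [hba]; exact ⟨hag, hah⟩
  have hcomp := α.act_comp g h b hb hmem
  have hbmem := α.mem_comp g h b hb hmem
  refine ⟨α.act_mem g a hag, ?_⟩
  rw [← hba, hcomp]
  exact α.act_mem (h ≫ g) b hbmem

lemma PartialAction.key {w x y : G} (g : x ⟶ y) (h : w ⟶ x) :
    α.act g '' (α.D (Groupoid.inv g) ∩ α.D h) = α.D g ∩ α.D (h ≫ g) := by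
  apply Set.Subset.antisymm
  · rintro c ⟨a, ha, rfl⟩
    exact α.key_sub g h ha
  · rintro c hc
    have hc' : c ∈ α.D (Groupoid.inv (Groupoid.inv g)) ∩ α.D (h ≫ g) := by
      rw [show Groupoid.inv (Groupoid.inv g) = g by simp [Groupoid.inv_eq_inv]]
      exact hc
    have h2 := α.key_sub (Groupoid.inv g) (h ≫ g) hc'
    rw [show (h ≫ g) ≫ Groupoid.inv g = h by simp] at h2
    refine ⟨α.act (Groupoid.inv g) c, h2, ?_⟩
    have : c ∈ α.D (Groupoid.inv (Groupoid.inv g)) := hc'.1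
    have := α.act_inv_act (Groupoid.inv g) this
    rwa [show Groupoid.inv (Groupoid.inv g) = g by simp [Groupoid.inv_eq_inv]] at this

lemma PartialAction.image_inter {x y : G} (g : x ⟶ y) {S T : Set A}
    (hS : S ⊆ α.D (Groupoid.inv g)) (hT : T ⊆ α.D (Groupoid.inv g)) :
    α.act g '' (S ∩ T) = α.act g '' S ∩ α.act g '' T := by
  apply Set.Subset.antisymm
  · rintro c ⟨a, ⟨haS, haT⟩, rfl⟩
    exact ⟨⟨a, haS, rfl⟩, ⟨a, haT, rfl⟩⟩
  · rintro c ⟨⟨a, haS, rfl⟩, ⟨b, hbT, hba⟩⟩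
    have : b = a := α.act_inj g b (hT hbT) a (hS haS) hba
    exact ⟨a, ⟨haS, this ▸ hbT⟩, rfl⟩

end PA

theorem extension_partial_actions_stmt6
    {G : Type v} [Groupoid G] {A : Type u} [NonUnitalRing A]
    (hconn : ∀ a b : G, Nonempty (a ⟶ b))
    (x : G) (τ : ∀ y : G, x ⟶ y) (hτx : τ x = 𝟙 x)
    (α : PartialAction G A) {y z : G} (g : y ⟶ z) :
    α.act (τ z) ''
        (α.D (Groupoid.inv (τ z)) ∩
          α.act (τ y ≫ g ≫ Groupoid.inv (τ z)) ''
            (α.D (Groupoid.inv (τ y)) ∩ α.D (Groupoid.inv (τ y ≫ g ≫ Groupoid.inv (τ z)))))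
      = α.D (τ z) ∩ α.D g ∩ α.D (τ y ≫ g) ∧
    IsIdealIn (α.D (τ z) ∩ α.D g ∩ α.D (τ y ≫ g)) (α.D (𝟙 z)) := by
  constructor
  · have hinner : α.act (τ y ≫ g ≫ Groupoid.inv (τ z)) ''
        (α.D (Groupoid.inv (τ y)) ∩ α.D (Groupoid.inv (τ y ≫ g ≫ Groupoid.inv (τ z))))
        = α.D (τ y ≫ g ≫ Groupoid.inv (τ z)) ∩ α.D (g ≫ Groupoid.inv (τ z)) := by
      rw [Set.inter_comm, α.key (τ y ≫ g ≫ Groupoid.inv (τ z)) (Groupoid.inv (τ y))]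
      congr 1
      congr 1
      simp
    rw [hinner]
    have hsplit : α.D (Groupoid.inv (τ z)) ∩
        (α.D (τ y ≫ g ≫ Groupoid.inv (τ z)) ∩ α.D (g ≫ Groupoid.inv (τ z)))
        = (α.D (Groupoid.inv (τ z)) ∩ α.D (τ y ≫ g ≫ Groupoid.inv (τ z))) ∩
          (α.D (Groupoid.inv (τ z)) ∩ α.D (g ≫ Groupoid.inv (τ z))) := by
      ext a; simp only [Set.mem_inter_iff]; tauto
    rw [hsplit, α.image_inter (τ z) Set.inter_subset_left Set.inter_subset_left,
        α.key (τ z) (τ y ≫ g ≫ Groupoid.inv (τ z)), α.key (τ z) (g ≫ Groupoid.inv (τ z))]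
    rw [show (τ y ≫ g ≫ Groupoid.inv (τ z)) ≫ τ z = τ y ≫ g by simp,
        show (g ≫ Groupoid.inv (τ z)) ≫ τ z = g by simp]
    ext a; simp only [Set.mem_inter_iff]; tauto
  · exact ((α.ideal_dom (τ z)).inter (α.ideal_dom g)).inter (α.ideal_dom (τ y ≫ g))
end

section
/- Let 𝒢 be a connected groupoid with fixed object x and transversal τ(x), and let (I, γ_{τ(x)}, γ_{(x)}) be an object of the category D_𝒢(A): a family of ideals I_y ⊆ A (y ∈ 𝒢₀), ring isomorphisms γ_{τ_y} : I_{τ_y⁻¹} → I_{τ_y} with I_{τ_y⁻¹} an ideal of I_x, I_{τ_y} an ideal of I_y, γ_{τ_x} = id_{I_x}, and a partial action γ_{(x)} = (I_h, γ_h)_{h∈𝒢(x)} of the group 𝒢(x) on I_x, such that for each g ∈ 𝒢 the set γ_{τ_{t(g)}}(I_{τ_{t(g)}⁻¹} ∩ γ_{g_x}(I_{τ_{s(g)}⁻¹} ∩ I_{g_x⁻¹})) is an ideal of I_{t(g)}, where g_x = τ_{t(g)}⁻¹ g τ_{s(g)}. Define θ_g = id_{I_y} if g = y ∈ 𝒢₀,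 and θ_g = γ_{τ_{t(g)}} ∘ γ_{g_x} ∘ γ_{τ_{s(g)}}⁻¹ (composition of partial bijections) otherwise, with B_g the range of θ_g. Then θ = (B_g, θ_g)_{g∈𝒢} is a partial action of 𝒢 on A. -/
open CategoryTheory

universe u v

/-- An object (I, γ_{τ(x)}, γ_{(x)}) of the category D_𝒢(A), relative to a connected
groupoid 𝒢, a chosen object x and a transversal τ (τ_y : x ⟶ y, τ_x = id_x):
a family of ideals I_y of A; ring isomorphisms γ_{τ_y} : I_{τ_y⁻¹} → I_{τ_y}
(with explicit inverses), where I_{τ_y⁻¹} is an ideal of I_x and I_{τ_y} an ideal of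
I_y, and γ_{τ_x} = id_{I_x}; a partial action γ_{(x)} = (I_h, γ_h) of the isotropy
group 𝒢(x) = (x ⟶ x) on I_x; and the ideal condition `cond_ideal` saying that for
every g : y ⟶ z (with g_x := τ_y ≫ g ≫ τ_z⁻¹) the set
γ_{τ_z}(I_{τ_z⁻¹} ∩ γ_{g_x}(I_{τ_y⁻¹} ∩ I_{g_x⁻¹})) is an ideal of I_z. -/
structure GroupoidDatum (G : Type v) [Groupoid G] (A : Type u) [NonUnitalRing A]
    (x : G) (τ : ∀ y : G, x ⟶ y) where
  I : G → Set A
  Dinv : G → Set A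
  Dfor : G → Set A
  tmap : G → A → A
  tinv : G → A → A
  DG : (x ⟶ x) → Set A
  gact : (x ⟶ x) → A → A
  ideal_I : ∀ y, IsIdealIn (I y) Set.univ
  ideal_Dinv : ∀ y, IsIdealIn (Dinv y) (I x)
  ideal_Dfor : ∀ y, IsIdealIn (Dfor y) (I y)
  tmap_mem : ∀ y, ∀ a ∈ Dinv y, tmap y a ∈ Dfor y
  tmap_add : ∀ y, ∀ a ∈ Dinv y, ∀ b ∈ Dinv y, tmap y (a + b) = tmap y a + tmap y b
  tmap_mul : ∀ y, ∀ a ∈ Dinv y, ∀ b ∈ Dinv y, tmap y (a * b) = tmap y a * tmap y b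
  tinv_mem : ∀ y, ∀ c ∈ Dfor y, tinv y c ∈ Dinv y
  tmap_tinv : ∀ y, ∀ c ∈ Dfor y, tmap y (tinv y c) = c
  tinv_tmap : ∀ y, ∀ a ∈ Dinv y, tinv y (tmap y a) = a
  tmap_x : Dinv x = I x ∧ Dfor x = I x ∧ ∀ a ∈ I x, tmap x a = a
  ideal_DG : ∀ h : x ⟶ x, IsIdealIn (DG h) (I x)
  gact_mem : ∀ h : x ⟶ x, ∀ a ∈ DG (Groupoid.inv h), gact h a ∈ DG h
  gact_add : ∀ h : x ⟶ x, ∀ a ∈ DG (Groupoid.inv h), ∀ b ∈ DG (Groupoid.inv h),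
    gact h (a + b) = gact h a + gact h b
  gact_mul : ∀ h : x ⟶ x, ∀ a ∈ DG (Groupoid.inv h), ∀ b ∈ DG (Groupoid.inv h),
    gact h (a * b) = gact h a * gact h b
  gact_inj : ∀ h : x ⟶ x, ∀ a ∈ DG (Groupoid.inv h), ∀ b ∈ DG (Groupoid.inv h),
    gact h a = gact h b → a = b
  gact_surj : ∀ h : x ⟶ x, ∀ c ∈ DG h, ∃ a ∈ DG (Groupoid.inv h), gact h a = c
  gact_one : DG (𝟙 x) = I x ∧ ∀ a ∈ I x, gact (𝟙 x) a = a
  gact_memcomp : ∀ g h : x ⟶ x, ∀ a ∈ DG (Groupoid.inv h),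
    gact h a ∈ DG (Groupoid.inv g) ∩ DG h → a ∈ DG (Groupoid.inv (h ≫ g))
  gact_comp : ∀ g h : x ⟶ x, ∀ a ∈ DG (Groupoid.inv h),
    gact h a ∈ DG (Groupoid.inv g) ∩ DG h → gact g (gact h a) = gact (h ≫ g) a
  cond_ideal : ∀ {y z : G} (g : y ⟶ z),
    IsIdealIn
      (tmap z '' (Dinv z ∩ gact (τ y ≫ g ≫ Groupoid.inv (τ z)) ''
        (Dinv y ∩ DG (Groupoid.inv (τ y ≫ g ≫ Groupoid.inv (τ z)))))) (I z)

/-!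
STATEMENT 7: Given an object γ = (I, γ_{τ(x)}, γ_{(x)}) of D_𝒢(A), define
θ_g = id_{I_y} when g = id_y is an identity, and otherwise
θ_g = γ_{τ_{t g}} ∘ γ_{g_x} ∘ γ_{τ_{s g}}⁻¹ (composition of partial bijections,
g_x = τ_{t g}⁻¹ g τ_{s g}), with B_g the range of θ_g, i.e.
B_g = γ_{τ_z}(I_{τ_z⁻¹} ∩ γ_{g_x}(I_{τ_y⁻¹} ∩ I_{g_x⁻¹})) for g : y ⟶ z non-identity
and B_{id_y} = I_y.  Then θ = (B_g, θ_g) is a partial action of 𝒢 on A.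
-/

section Aux
open scoped Classical

variable {G : Type v} [Groupoid G] {A : Type u} [NonUnitalRing A]

lemma ginv_ginv {y z : G} (g : y ⟶ z) : Groupoid.inv (Groupoid.inv g) = g := by
  simp [Groupoid.inv_eq_inv]

lemma isId_id (y : G) : IsId (𝟙 y) := ⟨rfl, (eqToHom_refl _ rfl).symm⟩

lemma isId_inv {y z : G} {g : y ⟶ z} (hg : IsId g) : IsId (Groupoid.inv g) := by
  obtain ⟨p, hp⟩ := hg; subst p
  rw [eqToHom_refl] at hp; subst hp
  have : Groupoid.inv (𝟙 y) = 𝟙 y := by simp [Groupoid.inv_eq_inv]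
  rw [this]; exact isId_id y

lemma isId_inv_iff {y z : G} {g : y ⟶ z} : IsId (Groupoid.inv g) ↔ IsId g :=
  ⟨fun h => by have := isId_inv h; rwa [ginv_ginv] at this, isId_inv⟩

variable {x : G}

/-- `g_x = τ_{s g} ≫ g ≫ τ_{t g}⁻¹`. -/
def gxm (τ : ∀ y : G, x ⟶ y) {y z : G} (g : y ⟶ z) : x ⟶ x :=
  τ y ≫ g ≫ Groupoid.inv (τ z)

lemma gx_inv (τ : ∀ y : G, x ⟶ y) {y z : G} (g : y ⟶ z) :
    gxm τ (Groupoid.inv g) = Groupoid.inv (gxm τ g) := by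
  simp [gxm, Groupoid.inv_eq_inv]

lemma gx_comp (τ : ∀ y : G, x ⟶ y) {w u z : G} (h : w ⟶ u) (g : u ⟶ z) :
    gxm τ h ≫ gxm τ g = gxm τ (h ≫ g) := by
  simp [gxm, Groupoid.inv_eq_inv]

lemma gx_isid (τ : ∀ y : G, x ⟶ y) {y z : G} {g : y ⟶ z} (hg : IsId g) :
    gxm τ g = 𝟙 x := by
  obtain ⟨p, hp⟩ := hg; subst p
  rw [eqToHom_refl] at hp; subst hp
  simp [gxm, Groupoid.inv_eq_inv]

variable {τ : ∀ y : G, x ⟶ y} (γ : GroupoidDatum G A x τ)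

lemma ginv_act (k : x ⟶ x) {a : A} (ha : a ∈ γ.DG (Groupoid.inv k)) :
    γ.gact (Groupoid.inv k) (γ.gact k a) = a := by
  have hm := γ.gact_mem k a ha
  have hm' : γ.gact k a ∈ γ.DG (Groupoid.inv (Groupoid.inv k)) := by
    rw [ginv_ginv]; exact hm
  have h3 := γ.gact_comp (Groupoid.inv k) k a ha ⟨hm', hm⟩
  rw [h3, Groupoid.comp_inv]
  exact γ.gact_one.2 a ((γ.ideal_DG _).1 ha)

/-- The graph relation of `θ_g`: `b ↦ a`. -/
def Pr {y z : G} (g : y ⟶ z) (b a : A) : Prop :=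
  b ∈ γ.Dfor y ∧ a ∈ γ.Dfor z ∧ γ.tinv y b ∈ γ.DG (Groupoid.inv (gxm τ g)) ∧
    γ.gact (gxm τ g) (γ.tinv y b) = γ.tinv z a

lemma Pr_flip {y z : G} {g : y ⟶ z} {b a : A} (hP : Pr γ g b a) :
    Pr γ (Groupoid.inv g) a b := by
  obtain ⟨h1, h2, h3, h4⟩ := hP
  refine ⟨h2, h1, ?_, ?_⟩
  · rw [gx_inv, ginv_ginv, ← h4]
    exact γ.gact_mem _ _ h3
  · rw [gx_inv, ← h4]
    exact ginv_act γ (gxm τ g) h3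

lemma Pr_comp {w u z : G} {h : w ⟶ u} {g : u ⟶ z} {a b c : A}
    (h1 : Pr γ h a b) (h2 : Pr γ g b c) : Pr γ (h ≫ g) a c := by
  obtain ⟨ha1, hb1, hd1, he1⟩ := h1
  obtain ⟨hb2, hc2, hd2, he2⟩ := h2
  have mem : γ.gact (gxm τ h) (γ.tinv w a) ∈
      γ.DG (Groupoid.inv (gxm τ g)) ∩ γ.DG (gxm τ h) :=
    ⟨by rw [he1]; exact hd2, γ.gact_mem _ _ hd1⟩
  have hmem := γ.gact_memcomp (gxm τ g) (gxm τ h) _ hd1 mem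
  refine ⟨ha1, hc2, ?_, ?_⟩
  · rw [← gx_comp]; exact hmem
  · rw [← gx_comp]
    have hco := γ.gact_comp (gxm τ g) (gxm τ h) _ hd1 mem
    rw [← hco, he1, he2]

lemma Pr_id {y z : G} {g : y ⟶ z} (hg : IsId g) {b a : A} (hP : Pr γ g b a) :
    b = a := by
  have hgx := gx_isid τ hg
  obtain ⟨p, hp⟩ := hg; subst p
  obtain ⟨h1, h2, h3, h4⟩ := hP
  rw [hgx] at h4
  rw [γ.gact_one.2 _ ((γ.ideal_DG _).1 h3)] at h4
  calc b = γ.tmap y (γ.tinv y b) := (γ.tmap_tinv y b h1).symm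
    _ = γ.tmap y (γ.tinv y a) := by rw [h4]
    _ = a := γ.tmap_tinv y a h2

/-- The domain family of the extended partial action. -/
noncomputable def thD : ∀ {y z : G}, (y ⟶ z) → Set A := fun {y z} g =>
  if IsId g then γ.I z else
    γ.tmap z '' (γ.Dinv z ∩ γ.gact (gxm τ g) ''
      (γ.Dinv y ∩ γ.DG (Groupoid.inv (gxm τ g))))

/-- The extended partial action maps. -/
noncomputable def thAct : ∀ {y z : G}, (y ⟶ z) → A → A := fun {y z} g a =>
  if IsId g then a else γ.tmap z (γ.gact (gxm τ g) (γ.tinv y a))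

lemma thD_of_isid {y z : G} {g : y ⟶ z} (hg : IsId g) : thD γ g = γ.I z := by
  rw [thD, if_pos hg]

lemma thD_of_not {y z : G} {g : y ⟶ z} (hg : ¬ IsId g) :
    thD γ g = γ.tmap z '' (γ.Dinv z ∩ γ.gact (gxm τ g) ''
      (γ.Dinv y ∩ γ.DG (Groupoid.inv (gxm τ g)))) := by
  rw [thD, if_neg hg]

lemma thAct_of_isid {y z : G} {g : y ⟶ z} (hg : IsId g) (a : A) :
    thAct γ g a = a := by
  rw [thAct, if_pos hg]

lemma thAct_of_not {y z : G} {g : y ⟶ z} (hg : ¬ IsId g) (a : A) :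
    thAct γ g a = γ.tmap z (γ.gact (gxm τ g) (γ.tinv y a)) := by
  rw [thAct, if_neg hg]

lemma mem_thD {y z : G} {g : y ⟶ z} (hg : ¬ IsId g) {a : A} :
    a ∈ thD γ g ↔ ∃ b, Pr γ g b a := by
  rw [thD_of_not γ hg]
  constructor
  · rintro ⟨c, ⟨hc1, d, ⟨hd1, hd2⟩, hdc⟩, hca⟩
    refine ⟨γ.tmap y d, γ.tmap_mem y d hd1, ?_, ?_, ?_⟩
    · rw [← hca]; exact γ.tmap_mem z c hc1
    · rw [γ.tinv_tmap y d hd1]; exact hd2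
    · rw [γ.tinv_tmap y d hd1, ← hca, γ.tinv_tmap z c hc1]; exact hdc
  · rintro ⟨b, h1, h2, h3, h4⟩
    exact ⟨γ.tinv z a, ⟨γ.tinv_mem z a h2,
      ⟨γ.tinv y b, ⟨γ.tinv_mem y b h1, h3⟩, h4⟩⟩, γ.tmap_tinv z a h2⟩

lemma thAct_spec {y z : G} {g : y ⟶ z} (hg : ¬ IsId g) {a : A}
    (ha : a ∈ thD γ (Groupoid.inv g)) : Pr γ g a (thAct γ g a) := by
  have hg' : ¬ IsId (Groupoid.inv g) := fun h => hg (isId_inv_iff.1 h)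
  obtain ⟨b, hb⟩ := (mem_thD γ hg').1 ha
  have hPf : Pr γ g a b := by
    have := Pr_flip γ hb; rwa [ginv_ginv] at this
  have hab : thAct γ g a = b := by
    rw [thAct_of_not γ hg, hPf.2.2.2, γ.tmap_tinv z b hPf.2.1]
  rw [hab]; exact hPf

lemma memD_of_Pr {y z : G} {g : y ⟶ z} (hg : ¬ IsId g) {b a : A}
    (hP : Pr γ g b a) : a ∈ thD γ g := (mem_thD γ hg).2 ⟨b, hP⟩

lemma ideal_refl {S : Set A} (h : IsIdealIn S Set.univ) : IsIdealIn S S :=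
  ⟨subset_rfl, h.2.1, h.2.2.1, h.2.2.2.1,
    fun t _ s hs => h.2.2.2.2 t (Set.mem_univ t) s hs⟩

end Aux

section Aux2
open scoped Classical
variable {G : Type v} [Groupoid G] {A : Type u} [NonUnitalRing A]
variable {x : G} {τ : ∀ y : G, x ⟶ y} (γ : GroupoidDatum G A x τ)

lemma pa_ideal_base (y : G) : IsIdealIn (thD γ (𝟙 y)) Set.univ := by
  rw [thD_of_isid γ (isId_id y)]
  exact γ.ideal_I y

lemma pa_ideal_dom {y z : G} (g : y ⟶ z) : IsIdealIn (thD γ g) (thD γ (𝟙 z)) := by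
  rw [thD_of_isid γ (isId_id z)]
  by_cases hg : IsId g
  · rw [thD_of_isid γ hg]
    exact ideal_refl (γ.ideal_I z)
  · rw [thD_of_not γ hg]
    exact γ.cond_ideal g

lemma pa_act_mem {y z : G} (g : y ⟶ z) (a : A) (ha : a ∈ thD γ (Groupoid.inv g)) :
    thAct γ g a ∈ thD γ g := by
  by_cases hg : IsId g
  · obtain ⟨p, hp⟩ := hg; subst p
    rw [eqToHom_refl] at hp; subst hp
    rw [thAct_of_isid γ (isId_id y), thD_of_isid γ (isId_id y)]
    rwa [thD_of_isid γ (isId_inv (isId_id y))] at ha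
  · exact memD_of_Pr γ hg (thAct_spec γ hg ha)

lemma pa_act_add {y z : G} (g : y ⟶ z) (a : A) (ha : a ∈ thD γ (Groupoid.inv g))
    (b : A) (hb : b ∈ thD γ (Groupoid.inv g)) :
    thAct γ g (a + b) = thAct γ g a + thAct γ g b := by
  by_cases hg : IsId g
  · rw [thAct_of_isid γ hg, thAct_of_isid γ hg, thAct_of_isid γ hg]
  · have hPa := thAct_spec γ hg ha
    have hPb := thAct_spec γ hg hb
    have hta : γ.tinv y a ∈ γ.Dinv y := γ.tinv_mem y a hPa.1
    have htb : γ.tinv y b ∈ γ.Dinv y := γ.tinv_mem y b hPb.1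
    have hsum : γ.tinv y (a + b) = γ.tinv y a + γ.tinv y b := by
      have hmem : γ.tinv y a + γ.tinv y b ∈ γ.Dinv y :=
        (γ.ideal_Dinv y).2.2.1 _ hta _ htb
      have htm : γ.tmap y (γ.tinv y a + γ.tinv y b) = a + b := by
        rw [γ.tmap_add y _ hta _ htb, γ.tmap_tinv y a hPa.1, γ.tmap_tinv y b hPb.1]
      rw [← htm, γ.tinv_tmap y _ hmem]
    have ga : γ.gact (gxm τ g) (γ.tinv y a) ∈ γ.Dinv z := by
      rw [hPa.2.2.2]; exact γ.tinv_mem z _ hPa.2.1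
    have gb : γ.gact (gxm τ g) (γ.tinv y b) ∈ γ.Dinv z := by
      rw [hPb.2.2.2]; exact γ.tinv_mem z _ hPb.2.1
    rw [thAct_of_not γ hg, thAct_of_not γ hg, thAct_of_not γ hg, hsum,
      γ.gact_add _ _ hPa.2.2.1 _ hPb.2.2.1, γ.tmap_add z _ ga _ gb]

lemma pa_act_mul {y z : G} (g : y ⟶ z) (a : A) (ha : a ∈ thD γ (Groupoid.inv g))
    (b : A) (hb : b ∈ thD γ (Groupoid.inv g)) :
    thAct γ g (a * b) = thAct γ g a * thAct γ g b := by
  by_cases hg : IsId g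
  · rw [thAct_of_isid γ hg, thAct_of_isid γ hg, thAct_of_isid γ hg]
  · have hPa := thAct_spec γ hg ha
    have hPb := thAct_spec γ hg hb
    have hta : γ.tinv y a ∈ γ.Dinv y := γ.tinv_mem y a hPa.1
    have htb : γ.tinv y b ∈ γ.Dinv y := γ.tinv_mem y b hPb.1
    have hmul : γ.tinv y (a * b) = γ.tinv y a * γ.tinv y b := by
      have hmem : γ.tinv y a * γ.tinv y b ∈ γ.Dinv y :=
        ((γ.ideal_Dinv y).2.2.2.2 _ ((γ.ideal_Dinv y).1 hta) _ htb).1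
      have htm : γ.tmap y (γ.tinv y a * γ.tinv y b) = a * b := by
        rw [γ.tmap_mul y _ hta _ htb, γ.tmap_tinv y a hPa.1, γ.tmap_tinv y b hPb.1]
      rw [← htm, γ.tinv_tmap y _ hmem]
    have ga : γ.gact (gxm τ g) (γ.tinv y a) ∈ γ.Dinv z := by
      rw [hPa.2.2.2]; exact γ.tinv_mem z _ hPa.2.1
    have gb : γ.gact (gxm τ g) (γ.tinv y b) ∈ γ.Dinv z := by
      rw [hPb.2.2.2]; exact γ.tinv_mem z _ hPb.2.1
    rw [thAct_of_not γ hg, thAct_of_not γ hg, thAct_of_not γ hg, hmul,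
      γ.gact_mul _ _ hPa.2.2.1 _ hPb.2.2.1, γ.tmap_mul z _ ga _ gb]

lemma pa_act_inj {y z : G} (g : y ⟶ z) (a : A) (ha : a ∈ thD γ (Groupoid.inv g))
    (b : A) (hb : b ∈ thD γ (Groupoid.inv g)) (heq : thAct γ g a = thAct γ g b) :
    a = b := by
  by_cases hg : IsId g
  · rwa [thAct_of_isid γ hg, thAct_of_isid γ hg] at heq
  · have hPa := thAct_spec γ hg ha
    have hPb := thAct_spec γ hg hb
    have h1 : γ.gact (gxm τ g) (γ.tinv y a) = γ.gact (gxm τ g) (γ.tinv y b) := by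
      rw [hPa.2.2.2, hPb.2.2.2, heq]
    have h2 := γ.gact_inj _ _ hPa.2.2.1 _ hPb.2.2.1 h1
    calc a = γ.tmap y (γ.tinv y a) := (γ.tmap_tinv y a hPa.1).symm
      _ = γ.tmap y (γ.tinv y b) := by rw [h2]
      _ = b := γ.tmap_tinv y b hPb.1

lemma pa_act_surj {y z : G} (g : y ⟶ z) (c : A) (hc : c ∈ thD γ g) :
    ∃ a ∈ thD γ (Groupoid.inv g), thAct γ g a = c := by
  by_cases hg : IsId g
  · obtain ⟨p, hp⟩ := hg; subst p
    rw [eqToHom_refl] at hp; subst hp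
    refine ⟨c, ?_, thAct_of_isid γ (isId_id y) c⟩
    rw [thD_of_isid γ (isId_inv (isId_id y))]
    rwa [thD_of_isid γ (isId_id y)] at hc
  · have hg' : ¬ IsId (Groupoid.inv g) := fun h => hg (isId_inv_iff.1 h)
    obtain ⟨b, hP⟩ := (mem_thD γ hg).1 hc
    refine ⟨b, memD_of_Pr γ hg' (Pr_flip γ hP), ?_⟩
    rw [thAct_of_not γ hg, hP.2.2.2, γ.tmap_tinv z c hP.2.1]

lemma pa_mem_comp {w u z : G} (g : u ⟶ z) (h : w ⟶ u) (a : A)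
    (ha : a ∈ thD γ (Groupoid.inv h))
    (hmem : thAct γ h a ∈ thD γ (Groupoid.inv g) ∩ thD γ h) :
    a ∈ thD γ (Groupoid.inv (h ≫ g)) := by
  by_cases hh : IsId h
  · obtain ⟨p, hp⟩ := hh; subst p
    rw [eqToHom_refl] at hp; subst hp
    rw [Category.id_comp]
    have := hmem.1
    rwa [thAct_of_isid γ (isId_id w)] at this
  · by_cases hgI : IsId g
    · obtain ⟨p, hp⟩ := hgI; subst p
      rw [eqToHom_refl] at hp; subst hp
      rwa [Category.comp_id]
    · have hPa := thAct_spec γ hh ha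
      have hPb := thAct_spec γ hgI hmem.1
      have hPc := Pr_comp γ hPa hPb
      by_cases hc : IsId (h ≫ g)
      · rw [thD_of_isid γ (isId_inv hc)]
        exact (γ.ideal_Dfor w).1 hPc.1
      · have hc' : ¬ IsId (Groupoid.inv (h ≫ g)) := fun hI => hc (isId_inv_iff.1 hI)
        exact memD_of_Pr γ hc' (Pr_flip γ hPc)

lemma pa_act_comp {w u z : G} (g : u ⟶ z) (h : w ⟶ u) (a : A)
    (ha : a ∈ thD γ (Groupoid.inv h))
    (hmem : thAct γ h a ∈ thD γ (Groupoid.inv g) ∩ thD γ h) :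
    thAct γ g (thAct γ h a) = thAct γ (h ≫ g) a := by
  by_cases hh : IsId h
  · obtain ⟨p, hp⟩ := hh; subst p
    rw [eqToHom_refl] at hp; subst hp
    rw [thAct_of_isid γ (isId_id w), Category.id_comp]
  · by_cases hgI : IsId g
    · obtain ⟨p, hp⟩ := hgI; subst p
      rw [eqToHom_refl] at hp; subst hp
      rw [thAct_of_isid γ (isId_id u), Category.comp_id]
    · have hPa := thAct_spec γ hh ha
      have hPb := thAct_spec γ hgI hmem.1
      have hPc := Pr_comp γ hPa hPb
      by_cases hc : IsId (h ≫ g)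
      · rw [thAct_of_isid γ hc]
        exact (Pr_id γ hc hPc).symm
      · rw [thAct_of_not γ hc, hPc.2.2.2, γ.tmap_tinv z _ hPc.2.1]

end Aux2

theorem extension_partial_actions_stmt7
    {G : Type v} [Groupoid G] {A : Type u} [NonUnitalRing A]
    (hconn : ∀ a b : G, Nonempty (a ⟶ b))
    (x : G) (τ : ∀ y : G, x ⟶ y) (hτx : τ x = 𝟙 x)
    (γ : GroupoidDatum G A x τ) :
    ∃ θ : PartialAction G A,
      (∀ y : G, θ.D (𝟙 y) = γ.I y) ∧
      (∀ {y z : G} (g : y ⟶ z), ¬ IsId g →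
        θ.D g = γ.tmap z '' (γ.Dinv z ∩ γ.gact (τ y ≫ g ≫ Groupoid.inv (τ z)) ''
            (γ.Dinv y ∩ γ.DG (Groupoid.inv (τ y ≫ g ≫ Groupoid.inv (τ z))))) ∧
        ∀ a ∈ θ.D (Groupoid.inv g),
          θ.act g a = γ.tmap z (γ.gact (τ y ≫ g ≫ Groupoid.inv (τ z)) (γ.tinv y a))) :=
  ⟨{ D := fun {y z} g => thD γ g
     act := fun {y z} g a => thAct γ g a
     ideal_base := fun y => pa_ideal_base γ y
     ideal_dom := fun {y z} g => pa_ideal_dom γ g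
     act_mem := fun {y z} g a ha => pa_act_mem γ g a ha
     act_add := fun {y z} g a ha b hb => pa_act_add γ g a ha b hb
     act_mul := fun {y z} g a ha b hb => pa_act_mul γ g a ha b hb
     act_inj := fun {y z} g a ha b hb heq => pa_act_inj γ g a ha b hb heq
     act_surj := fun {y z} g c hc => pa_act_surj γ g c hc
     act_id := fun y a _ => thAct_of_isid γ (isId_id y) a
     mem_comp := fun {w u z} g h a ha hmem => pa_mem_comp γ g h a ha hmem
     act_comp := fun {w u z} g h a ha hmem => pa_act_comp γ g h a ha hmem },
   fun y => thD_of_isid γ (isId_id y),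
   fun {y z} g hg => ⟨thD_of_not γ hg, fun a _ => thAct_of_not γ hg a⟩⟩
end

section
/- Let α = (A_g, α_g)_{g∈𝒢} be a partial action of a connected groupoid 𝒢 on a ring A, with fixed object x and transversal τ(x). Then the following are equivalent: (i) A_g ⊆ A_{τ_{t(g)}} ∩ A_{g τ_{s(g)}} for all non-identity g; (ii) A_g ⊆ A_{τ_{t(g)}} for all non-identity g. -/
open CategoryTheory

universe u v

/-!
STATEMENT 9: For a partial action α of a connected groupoid 𝒢 on A with fixed object x
and transversal τ(x), the following are equivalent:
(i) A_g ⊆ A_{τ_{t g}} ∩ A_{g τ_{s g}} for all non-identity g;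
(ii) A_g ⊆ A_{τ_{t g}} for all non-identity g.
-/

lemma isId_of_inv {G : Type v} [Groupoid G] {y z : G} (g : y ⟶ z)
    (h : IsId (Groupoid.inv g)) : IsId g := by
  obtain ⟨e, he⟩ := h
  subst e
  refine ⟨rfl, ?_⟩
  have : g = Groupoid.inv (Groupoid.inv g) := by simp
  rw [this, he]
  simp

theorem extension_partial_actions_stmt9
    {G : Type v} [Groupoid G] {A : Type u} [NonUnitalRing A]
    (hconn : ∀ a b : G, Nonempty (a ⟶ b))
    (x : G) (τ : ∀ y : G, x ⟶ y) (hτx : τ x = 𝟙 x)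
    (α : PartialAction G A) :
    (∀ {y z : G} (g : y ⟶ z), ¬ IsId g → α.D g ⊆ α.D (τ z) ∩ α.D (τ y ≫ g))
      ↔ (∀ {y z : G} (g : y ⟶ z), ¬ IsId g → α.D g ⊆ α.D (τ z)) := by
  constructor
  · intro H y z g hg a ha
    exact (H g hg ha).1
  · intro H y z g hg
    intro a ha
    refine ⟨H g hg ha, ?_⟩
    obtain ⟨b, hb, hba⟩ := α.act_surj g a ha
    have hginv : ¬ IsId (Groupoid.inv g) := fun h => hg (isId_of_inv g h)
    have hbτ : b ∈ α.D (τ y) := H (Groupoid.inv g) hginv hb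
    obtain ⟨c, hc, hcb⟩ := α.act_surj (τ y) b hbτ
    have hmem : α.act (τ y) c ∈ α.D (Groupoid.inv g) ∩ α.D (τ y) := by
      rw [hcb]; exact ⟨hb, hbτ⟩
    have hc2 := α.mem_comp g (τ y) c hc hmem
    have hcomp := α.act_comp g (τ y) c hc hmem
    rw [hcb, hba] at hcomp
    rw [hcomp]
    exact α.act_mem (τ y ≫ g) c hc2
end

section
/- Let θ = Ext(γ) for γ = (I, γ_{τ(x)}, γ_{(x)}) ∈ D_𝒢(A), where I_x = A·1_x for a central idempotent 1_x of A and the partial action γ_{(x)} of 𝒢(x) on I_x is unital, with I_h = I_x·1_h for central idempotents 1_h of I_x, and where I_{τ_y⁻¹} = I_x and I_{τ_y} = I_y for all objects y. Then for every morphism g ∈ 𝒢, B_g = A·1_g where 1_g := γ_{τ_{t(g)}}(1_{g_x}) is a central idempotent of A. -/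
open CategoryTheory

universe u v

/-!
STATEMENT 11: Let θ = Ext(γ) for γ = (I, γ_{τ(x)}, γ_{(x)}) ∈ D_𝒢(A) with
I_{τ_y⁻¹} = I_x and I_{τ_y} = I_y for all objects y, I_x = A·1_x for a central
idempotent 1_x of A, and γ_{(x)} unital: I_h = I_x·1_h for central idempotents 1_h of
I_x.  Then for every morphism g (g_x = τ_{s g} ≫ g ≫ τ_{t g}⁻¹ ∈ 𝒢(x)),
B_g = A·1_g where 1_g := γ_{τ_{t g}}(1_{g_x}) is a central idempotent of A.
(For a non-identity g : y ⟶ z the ideal B_g of θ is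
γ_{τ_z}(I_{τ_z⁻¹} ∩ γ_{g_x}(I_{τ_y⁻¹} ∩ I_{g_x⁻¹})); for g = id_y it is I_y, and the
corresponding idempotent is γ_{τ_y}(1_{𝟙 x}).)
-/
theorem extension_partial_actions_stmt11
    {G : Type v} [Groupoid G] {A : Type u} [NonUnitalRing A]
    (hconn : ∀ a b : G, Nonempty (a ⟶ b))
    (x : G) (τ : ∀ y : G, x ⟶ y) (hτx : τ x = 𝟙 x)
    (γ : GroupoidDatum G A x τ)
    (hC1a : ∀ y : G, γ.Dinv y = γ.I x)
    (hC1b : ∀ y : G, γ.Dfor y = γ.I y)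
    (ex : A) (hex_idem : ex * ex = ex) (hex_cent : ∀ b : A, ex * b = b * ex)
    (hIx : γ.I x = {a : A | ∃ b : A, a = b * ex})
    (e : (x ⟶ x) → A)
    (he_mem : ∀ h : x ⟶ x, e h ∈ γ.I x)
    (he_idem : ∀ h : x ⟶ x, e h * e h = e h)
    (he_cent : ∀ h : x ⟶ x, ∀ b ∈ γ.I x, e h * b = b * e h)
    (hDG : ∀ h : x ⟶ x, γ.DG h = {a : A | ∃ b ∈ γ.I x, a = b * e h}) :
    (∀ {y z : G} (g : y ⟶ z), ¬ IsId g →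
      (∀ b : A, γ.tmap z (e (τ y ≫ g ≫ Groupoid.inv (τ z))) * b
          = b * γ.tmap z (e (τ y ≫ g ≫ Groupoid.inv (τ z)))) ∧
      γ.tmap z (e (τ y ≫ g ≫ Groupoid.inv (τ z)))
          * γ.tmap z (e (τ y ≫ g ≫ Groupoid.inv (τ z)))
        = γ.tmap z (e (τ y ≫ g ≫ Groupoid.inv (τ z))) ∧
      γ.tmap z '' (γ.Dinv z ∩ γ.gact (τ y ≫ g ≫ Groupoid.inv (τ z)) ''
          (γ.Dinv y ∩ γ.DG (Groupoid.inv (τ y ≫ g ≫ Groupoid.inv (τ z)))))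
        = {a : A | ∃ b : A, a = b * γ.tmap z (e (τ y ≫ g ≫ Groupoid.inv (τ z)))}) ∧
    (∀ y : G,
      (∀ b : A, γ.tmap y (e (𝟙 x)) * b = b * γ.tmap y (e (𝟙 x))) ∧
      γ.tmap y (e (𝟙 x)) * γ.tmap y (e (𝟙 x)) = γ.tmap y (e (𝟙 x)) ∧
      γ.I y = {a : A | ∃ b : A, a = b * γ.tmap y (e (𝟙 x))}) := by
  -- key lemma: for any object y and any h : x ⟶ x, u := tmap y (e h) is a
  -- central idempotent of A lying in I y, and it is central in I y.
  have key : ∀ (y : G) (h : x ⟶ x),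
      γ.tmap y (e h) ∈ γ.I y ∧
      (γ.tmap y (e h) * γ.tmap y (e h) = γ.tmap y (e h)) ∧
      (∀ b : A, γ.tmap y (e h) * b = b * γ.tmap y (e h)) := by
    intro y h
    have hmemD : e h ∈ γ.Dinv y := by rw [hC1a]; exact he_mem h
    have humem : γ.tmap y (e h) ∈ γ.I y := by
      have := γ.tmap_mem y _ hmemD
      rwa [hC1b] at this
    have hidem : γ.tmap y (e h) * γ.tmap y (e h) = γ.tmap y (e h) := by
      rw [← γ.tmap_mul y _ hmemD _ hmemD, he_idem]
    have hcentI : ∀ c ∈ γ.I y, γ.tmap y (e h) * c = c * γ.tmap y (e h) := by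
      intro c hc
      have hc' : c ∈ γ.Dfor y := by rwa [hC1b]
      have htc : γ.tinv y c ∈ γ.Dinv y := γ.tinv_mem y c hc'
      have htcIx : γ.tinv y c ∈ γ.I x := by rwa [hC1a] at htc
      calc γ.tmap y (e h) * c
          = γ.tmap y (e h) * γ.tmap y (γ.tinv y c) := by rw [γ.tmap_tinv y c hc']
        _ = γ.tmap y (e h * γ.tinv y c) := (γ.tmap_mul y _ hmemD _ htc).symm
        _ = γ.tmap y (γ.tinv y c * e h) := by rw [he_cent h _ htcIx]
        _ = γ.tmap y (γ.tinv y c) * γ.tmap y (e h) := γ.tmap_mul y _ htc _ hmemD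
        _ = c * γ.tmap y (e h) := by rw [γ.tmap_tinv y c hc']
    refine ⟨humem, hidem, ?_⟩
    intro b
    obtain ⟨_, _, _, _, hmul⟩ := γ.ideal_I y
    have h1 : γ.tmap y (e h) * b ∈ γ.I y := (hmul b trivial _ humem).2
    have h2 : b * γ.tmap y (e h) ∈ γ.I y := (hmul b trivial _ humem).1
    set u := γ.tmap y (e h)
    calc u * b = (u * u) * b := by rw [hidem]
      _ = u * (u * b) := by rw [mul_assoc]
      _ = (u * b) * u := hcentI _ h1
      _ = u * (b * u) := by rw [mul_assoc]
      _ = (b * u) * u := hcentI _ h2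
      _ = b * (u * u) := by rw [mul_assoc]
      _ = b * u := by rw [hidem]
  constructor
  · -- non-identity morphisms
    intro y z g _
    set gx : x ⟶ x := τ y ≫ g ≫ Groupoid.inv (τ z) with hgx
    obtain ⟨humem, hidem, hcent⟩ := key z gx
    refine ⟨hcent, hidem, ?_⟩
    have hDGsub : γ.DG gx ⊆ γ.I x := (γ.ideal_DG gx).1
    have hDGsub' : γ.DG (Groupoid.inv gx) ⊆ γ.I x := (γ.ideal_DG _).1
    ext a
    constructor
    · rintro ⟨w, ⟨hwD, v, ⟨hvD, hvDG⟩, rfl⟩, rfl⟩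
      have hwDG : γ.gact gx v ∈ γ.DG gx := γ.gact_mem gx v hvDG
      rw [hDG gx] at hwDG
      obtain ⟨b, hb, hbe⟩ := hwDG
      have hbD : b ∈ γ.Dinv z := by rwa [hC1a]
      have heD : e gx ∈ γ.Dinv z := by rw [hC1a]; exact he_mem gx
      exact ⟨γ.tmap z b, by rw [hbe, γ.tmap_mul z _ hbD _ heD]⟩
    · rintro ⟨b, rfl⟩
      set u := γ.tmap z (e gx) with hu
      obtain ⟨_, _, _, _, hmulI⟩ := γ.ideal_I z
      have hbu : b * u ∈ γ.I z := (hmulI b trivial _ humem).1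
      have hbu' : b * u ∈ γ.Dfor z := by rwa [hC1b]
      have hc : γ.tinv z (b * u) ∈ γ.Dinv z := γ.tinv_mem z _ hbu'
      have hcIx : γ.tinv z (b * u) ∈ γ.I x := by rwa [hC1a] at hc
      set c := γ.tinv z (b * u)
      have hceDG : c * e gx ∈ γ.DG gx := by
        rw [hDG gx]; exact ⟨c, hcIx, rfl⟩
      obtain ⟨v, hvDG, hv⟩ := γ.gact_surj gx _ hceDG
      have hvD : v ∈ γ.Dinv y := by rw [hC1a]; exact hDGsub' hvDG
      have hceIx : c * e gx ∈ γ.Dinv z := by rw [hC1a]; exact hDGsub hceDG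
      have heD : e gx ∈ γ.Dinv z := by rw [hC1a]; exact he_mem gx
      refine ⟨c * e gx, ⟨hceIx, v, ⟨hvD, hvDG⟩, hv⟩, ?_⟩
      rw [γ.tmap_mul z _ hc _ heD, γ.tmap_tinv z _ hbu', ← hu, mul_assoc, hidem]
  · -- identity morphisms
    intro y
    obtain ⟨humem, hidem, hcent⟩ := key y (𝟙 x)
    refine ⟨hcent, hidem, ?_⟩
    have hunit : ∀ c ∈ γ.I x, c * e (𝟙 x) = c := by
      intro c hc
      have : c ∈ γ.DG (𝟙 x) := by rw [γ.gact_one.1]; exact hc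
      rw [hDG (𝟙 x)] at this
      obtain ⟨b, _, rfl⟩ := this
      rw [mul_assoc, he_idem]
    ext a
    constructor
    · intro ha
      have ha' : a ∈ γ.Dfor y := by rwa [hC1b]
      have hta : γ.tinv y a ∈ γ.Dinv y := γ.tinv_mem y a ha'
      have htaIx : γ.tinv y a ∈ γ.I x := by rwa [hC1a] at hta
      have heD : e (𝟙 x) ∈ γ.Dinv y := by rw [hC1a]; exact he_mem _
      refine ⟨a, ?_⟩
      calc a = γ.tmap y (γ.tinv y a) := (γ.tmap_tinv y a ha').symm
        _ = γ.tmap y (γ.tinv y a * e (𝟙 x)) := by rw [hunit _ htaIx]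
        _ = γ.tmap y (γ.tinv y a) * γ.tmap y (e (𝟙 x)) := γ.tmap_mul y _ hta _ heD
        _ = a * γ.tmap y (e (𝟙 x)) := by rw [γ.tmap_tinv y a ha']
    · rintro ⟨b, rfl⟩
      obtain ⟨_, _, _, _, hmulI⟩ := γ.ideal_I y
      exact (hmulI b trivial _ humem).1
end

section
/- In the setting where 𝒢 is a connected finite groupoid, θ = Ext(γ) is a unital partial action of 𝒢 on A = ⊕_{y∈𝒢₀} B_y, with trace map t_θ(a) = Σ_{g∈𝒢} θ_g(a·1_{g⁻¹}): for b_x ∈ B_x and b_z = γ_{τ_z}(b_x) ∈ B_z, one has t_θ(b_z) = Σ_{y∈𝒢₀} γ_{τ_y}(t_{θ_{(x)}}(b_x)), where t_{θ_{(x)}}(b) = Σ_{h∈𝒢(x)} θ_h(b·1_{h⁻¹}) is the trace map of the partial group action of 𝒢(x) on B_x. -/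
open CategoryTheory

universe u v

/- Auxiliary lemmas -/

section Aux

variable {G : Type v} [Groupoid G] {A : Type u} [NonUnitalRing A]

lemma ginv_inv {a b : G} (f : a ⟶ b) : Groupoid.inv (Groupoid.inv f) = f := by
  simp [Groupoid.inv_eq_inv]

lemma ginv_comp {a b c : G} (f : a ⟶ b) (g : b ⟶ c) :
    Groupoid.inv (f ≫ g) = Groupoid.inv g ≫ Groupoid.inv f := by
  simp [Groupoid.inv_eq_inv]

lemma pa_act_zero (θ : PartialAction G A) {y z : G} (g : y ⟶ z) : θ.act g 0 = 0 := by
  have h0 : (0 : A) ∈ θ.D (Groupoid.inv g) := (θ.ideal_dom _).2.1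
  have h : θ.act g 0 = θ.act g 0 + θ.act g 0 := by
    simpa using θ.act_add g 0 h0 0 h0
  exact (left_eq_add.mp h)

lemma pa_sum_mem (θ : PartialAction G A) {ι : Type*} (s : Finset ι) (f : ι → A)
    {y z : G} (g : y ⟶ z) (hf : ∀ i ∈ s, f i ∈ θ.D g) : (∑ i ∈ s, f i) ∈ θ.D g := by
  classical
  induction s using Finset.induction_on with
  | empty => simpa using (θ.ideal_dom g).2.1
  | @insert a s hnot ih =>
    rw [Finset.sum_insert hnot]
    exact (θ.ideal_dom g).2.2.1 _ (hf a (Finset.mem_insert_self a s))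
      _ (ih fun i hi => hf i (Finset.mem_insert_of_mem hi))

lemma pa_act_sum (θ : PartialAction G A) {ι : Type*} (s : Finset ι) (f : ι → A)
    {y z : G} (g : y ⟶ z) (hf : ∀ i ∈ s, f i ∈ θ.D (Groupoid.inv g)) :
    θ.act g (∑ i ∈ s, f i) = ∑ i ∈ s, θ.act g (f i) := by
  classical
  induction s using Finset.induction_on with
  | empty => simpa using pa_act_zero θ g
  | @insert a s hnot ih =>
    rw [Finset.sum_insert hnot, Finset.sum_insert hnot,
      θ.act_add g _ (hf a (Finset.mem_insert_self a s)) _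
        (pa_sum_mem θ s f _ fun i hi => hf i (Finset.mem_insert_of_mem hi)),
      ih fun i hi => hf i (Finset.mem_insert_of_mem hi)]

end Aux

/-!
STATEMENT 13: In the same setting (𝒢 connected finite groupoid, θ = Ext(γ) unital,
A = ⊕_y B_y, trace t_θ(a) = Σ_{g∈𝒢} θ_g(a·1_{g⁻¹})): for b_x ∈ B_x and
b_z = γ_{τ_z}(b_x) = θ_{τ_z}(b_x) ∈ B_z one has
t_θ(b_z) = Σ_{y∈𝒢₀} γ_{τ_y}(t_{θ_{(x)}}(b_x)),
where t_{θ_{(x)}}(b) = Σ_{h∈𝒢(x)} θ_h(b·1_{h⁻¹}).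
-/
theorem extension_partial_actions_stmt13
    {G : Type v} [Groupoid G] {A : Type u} [NonUnitalRing A]
    [Fintype G] [∀ y z : G, Fintype (y ⟶ z)]
    (hconn : ∀ a b : G, Nonempty (a ⟶ b))
    (x : G) (τ : ∀ y : G, x ⟶ y) (hτx : τ x = 𝟙 x)
    (θ : PartialAction G A)
    (e : ∀ {y z : G}, (y ⟶ z) → A)
    (he_idem : ∀ {y z : G} (g : y ⟶ z), e g * e g = e g)
    (he_cent : ∀ {y z : G} (g : y ⟶ z) (b : A), e g * b = b * e g)
    (hDe : ∀ {y z : G} (g : y ⟶ z), θ.D g = {a : A | ∃ b : A, a = b * e g})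
    (hgt1 : ∀ y : G, θ.D (Groupoid.inv (τ y)) = θ.D (𝟙 x))
    (hgt2 : ∀ y : G, θ.D (τ y) = θ.D (𝟙 y))
    (horth : ∀ y z : G, y ≠ z → ∀ a ∈ θ.D (𝟙 y), ∀ b ∈ θ.D (𝟙 z), a * b = 0)
    (hspan : ∀ a : A, ∃ f : G → A, (∀ y : G, f y ∈ θ.D (𝟙 y)) ∧ a = ∑ y : G, f y)
    (bx : A) (hbx : bx ∈ θ.D (𝟙 x)) (z : G) :
    (∑ y : G, ∑ w : G, ∑ g : y ⟶ w,
        θ.act g (θ.act (τ z) bx * e (Groupoid.inv g)))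
      = ∑ y : G, θ.act (τ y)
          (∑ h : x ⟶ x, θ.act h (bx * e (Groupoid.inv h))) := by
  classical
  -- basic facts
  have hDsub : ∀ {y w : G} (g : y ⟶ w), θ.D g ⊆ θ.D (𝟙 w) := fun g => (θ.ideal_dom g).1
  have he_mem : ∀ {y w : G} (g : y ⟶ w), e g ∈ θ.D g := by
    intro y w g; rw [hDe]; exact ⟨e g, (he_idem g).symm⟩
  have hmem_of_e : ∀ {y w : G} (g : y ⟶ w) (b : A), b * e g ∈ θ.D g := by
    intro y w g b; rw [hDe]; exact ⟨b, rfl⟩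
  have hunit : ∀ {y w : G} (g : y ⟶ w), ∀ a ∈ θ.D g, a * e g = a := by
    intro y w g a ha
    rw [hDe] at ha; obtain ⟨b, rfl⟩ := ha
    rw [mul_assoc, he_idem]
  -- the action maps units to units
  have hemap : ∀ {y w : G} (g : y ⟶ w), θ.act g (e (Groupoid.inv g)) = e g := by
    intro y w g
    have hmem : e (Groupoid.inv g) ∈ θ.D (Groupoid.inv g) := he_mem _
    have hu : θ.act g (e (Groupoid.inv g)) ∈ θ.D g := θ.act_mem g _ hmem
    obtain ⟨b, hb, hbe⟩ := θ.act_surj g (e g) (he_mem g)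
    have h1 : θ.act g (e (Groupoid.inv g)) * e g = θ.act g (e (Groupoid.inv g)) :=
      hunit g _ hu
    have h2 : θ.act g (e (Groupoid.inv g)) * e g = e g := by
      rw [← hbe, ← θ.act_mul g _ hmem b hb]
      have hb' : e (Groupoid.inv g) * b = b := by
        rw [he_cent]; exact hunit _ b hb
      rw [hb', hbe]
    exact h1.symm.trans h2
  have hbxiτ : ∀ y : G, bx ∈ θ.D (Groupoid.inv (τ y)) := by
    intro y; rw [hgt1]; exact hbx
  -- the key pointwise identity
  have key : ∀ (w : G) (h : x ⟶ x),
      θ.act (Groupoid.inv (τ z) ≫ h ≫ τ w)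
        (θ.act (τ z) bx * e (Groupoid.inv (Groupoid.inv (τ z) ≫ h ≫ τ w)))
        = θ.act (τ w) (θ.act h (bx * e (Groupoid.inv h))) := by
    intro w h
    set g : z ⟶ w := Groupoid.inv (τ z) ≫ h ≫ τ w with hgdef
    set m : x ⟶ z := Groupoid.inv h ≫ τ z with hmdef
    have e2 : τ z ≫ g = h ≫ τ w := by
      rw [hgdef]; simp
    have e4 : Groupoid.inv m ≫ τ w = g := by
      rw [hmdef, hgdef, ginv_comp, ginv_inv, Category.assoc]
    have e5 : (τ z ≫ g) ≫ Groupoid.inv (τ w) = h := by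
      rw [e2]; simp
    have heh : e h ∈ θ.D h := he_mem h
    have heih : e (Groupoid.inv h) ∈ θ.D (Groupoid.inv h) := he_mem _
    have heg : e (Groupoid.inv g) ∈ θ.D (Groupoid.inv g) := he_mem _
    -- Step A : act (inv h) (e h) = e (inv h)
    have hA : θ.act (Groupoid.inv h) (e h) = e (Groupoid.inv h) := by
      have := hemap (Groupoid.inv h)
      rwa [ginv_inv] at this
    have hehm : e h ∈ θ.D (Groupoid.inv (Groupoid.inv h)) := by
      rw [ginv_inv]; exact heh
    have hcondA : θ.act (Groupoid.inv h) (e h)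
        ∈ θ.D (Groupoid.inv (τ z)) ∩ θ.D (Groupoid.inv h) := by
      rw [hA]
      exact ⟨by rw [hgt1]; exact hDsub _ heih, heih⟩
    -- Step B : v = act m (e h), where v = act (τ z) (e (inv h))
    have hB : θ.act (τ z) (e (Groupoid.inv h)) = θ.act m (e h) := by
      rw [← hA]
      exact θ.act_comp (τ z) (Groupoid.inv h) (e h) hehm hcondA
    -- Step C : e h ∈ D (inv m)
    have hC : e h ∈ θ.D (Groupoid.inv m) :=
      θ.mem_comp (τ z) (Groupoid.inv h) (e h) hehm hcondA
    -- Step D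
    have hD : θ.act m (e h) ∈ θ.D m := θ.act_mem m (e h) hC
    -- Step E : v ∈ D (inv g)
    have hmc : θ.act m (e h) ∈ θ.D (Groupoid.inv (Groupoid.inv m)) := by
      rw [ginv_inv]; exact hD
    have hcondE : θ.act (Groupoid.inv m) (θ.act m (e h))
        ∈ θ.D (Groupoid.inv (τ w)) ∩ θ.D (Groupoid.inv m) := by
      have hmem2 : θ.act (Groupoid.inv m) (θ.act m (e h)) ∈ θ.D (Groupoid.inv m) :=
        θ.act_mem (Groupoid.inv m) _ hmc
      exact ⟨by rw [hgt1]; exact hDsub _ hmem2, hmem2⟩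
    have hE : θ.act (τ z) (e (Groupoid.inv h)) ∈ θ.D (Groupoid.inv g) := by
      have := θ.mem_comp (τ w) (Groupoid.inv m) (θ.act m (e h)) hmc hcondE
      rw [e4] at this
      rw [hB]; exact this
    -- Step F : c = act (inv (τ z)) (e (inv g)),  act (τ z) c = e (inv g)
    have hegz : e (Groupoid.inv g) ∈ θ.D (𝟙 z) := hDsub _ heg
    have hegiiτ : e (Groupoid.inv g) ∈ θ.D (Groupoid.inv (Groupoid.inv (τ z))) := by
      rw [ginv_inv, hgt2]; exact hegz
    set c : A := θ.act (Groupoid.inv (τ z)) (e (Groupoid.inv g)) with hcdef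
    have hcDiτ : c ∈ θ.D (Groupoid.inv (τ z)) := θ.act_mem (Groupoid.inv (τ z)) _ hegiiτ
    have hc1 : θ.act (τ z) c = e (Groupoid.inv g) := by
      have hcomp := θ.act_comp (τ z) (Groupoid.inv (τ z)) (e (Groupoid.inv g)) hegiiτ
        ⟨hcDiτ, hcDiτ⟩
      have hid : Groupoid.inv (τ z) ≫ τ z = 𝟙 z := Groupoid.inv_comp _
      rw [hid] at hcomp
      rw [← hcdef] at hcomp
      rw [hcomp, θ.act_id z _ hegz]
    -- Step G : c ∈ D (inv (τ z ≫ g))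
    have hG : c ∈ θ.D (Groupoid.inv (τ z ≫ g)) := by
      refine θ.mem_comp g (τ z) c hcDiτ ⟨?_, ?_⟩
      · rw [hc1]; exact heg
      · rw [hc1, hgt2]; exact hegz
    -- Step H : c ∈ D (inv h)
    have hH : c ∈ θ.D (Groupoid.inv h) := by
      have hsecond : θ.act (τ z ≫ g) c ∈ θ.D (τ z ≫ g) := θ.act_mem (τ z ≫ g) c hG
      have hfirst : θ.act (τ z ≫ g) c ∈ θ.D (Groupoid.inv (Groupoid.inv (τ w))) := by
        rw [ginv_inv, hgt2]; exact hDsub _ hsecond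
      have := θ.mem_comp (Groupoid.inv (τ w)) (τ z ≫ g) c hG ⟨hfirst, hsecond⟩
      rwa [e5] at this
    -- Step I : act (τ z) (e (inv h)) = e (inv g)
    have heihx : e (Groupoid.inv h) ∈ θ.D (Groupoid.inv (τ z)) := by
      rw [hgt1]; exact hDsub _ heih
    have hI : θ.act (τ z) (e (Groupoid.inv h)) = e (Groupoid.inv g) := by
      have hvE : θ.act (τ z) (e (Groupoid.inv h)) * e (Groupoid.inv g)
          = θ.act (τ z) (e (Groupoid.inv h)) := hunit _ _ hE
      have hev : e (Groupoid.inv g) * θ.act (τ z) (e (Groupoid.inv h))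
          = e (Groupoid.inv g) := by
        rw [← hc1, ← θ.act_mul (τ z) c hcDiτ _ heihx, hunit _ c hH]
      calc θ.act (τ z) (e (Groupoid.inv h))
          = θ.act (τ z) (e (Groupoid.inv h)) * e (Groupoid.inv g) := hvE.symm
        _ = e (Groupoid.inv g) * θ.act (τ z) (e (Groupoid.inv h)) :=
            (he_cent _ _).symm
        _ = e (Groupoid.inv g) := hev
    -- main chain
    have hbeh : bx * e (Groupoid.inv h) ∈ θ.D (Groupoid.inv h) := hmem_of_e _ bx
    have hbehx : bx * e (Groupoid.inv h) ∈ θ.D (Groupoid.inv (τ z)) := by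
      rw [hgt1]; exact hDsub _ hbeh
    have hmul1 : θ.act (τ z) (bx * e (Groupoid.inv h))
        = θ.act (τ z) bx * e (Groupoid.inv g) := by
      rw [θ.act_mul (τ z) bx (hbxiτ z) _ heihx, hI]
    have hcomp1 : θ.act g (θ.act (τ z) (bx * e (Groupoid.inv h)))
        = θ.act (τ z ≫ g) (bx * e (Groupoid.inv h)) := by
      refine θ.act_comp g (τ z) _ hbehx ⟨?_, ?_⟩
      · rw [hmul1]; exact hmem_of_e _ _
      · exact θ.act_mem (τ z) _ hbehx
    have hcomp2 : θ.act (τ w) (θ.act h (bx * e (Groupoid.inv h)))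
        = θ.act (h ≫ τ w) (bx * e (Groupoid.inv h)) := by
      refine θ.act_comp (τ w) h _ hbeh ⟨?_, ?_⟩
      · have := θ.act_mem h _ hbeh
        rw [hgt1]; exact hDsub _ this
      · exact θ.act_mem h _ hbeh
    rw [← hmul1, hcomp1, e2, ← hcomp2]
  -- vanishing of terms with y ≠ z
  have hvanish : ∀ (y w : G) (g : y ⟶ w), y ≠ z →
      θ.act g (θ.act (τ z) bx * e (Groupoid.inv g)) = 0 := by
    intro y w g hne
    have h1 : θ.act (τ z) bx ∈ θ.D (𝟙 z) := by
      have := θ.act_mem (τ z) bx (hbxiτ z)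
      rwa [hgt2] at this
    have h2 : e (Groupoid.inv g) ∈ θ.D (𝟙 y) := hDsub _ (he_mem _)
    have h0 : θ.act (τ z) bx * e (Groupoid.inv g) = 0 :=
      horth z y (Ne.symm hne) _ h1 _ h2
    rw [h0, pa_act_zero]
  -- assemble
  have hsum1 : (∑ y : G, ∑ w : G, ∑ g : y ⟶ w,
      θ.act g (θ.act (τ z) bx * e (Groupoid.inv g)))
      = ∑ w : G, ∑ g : z ⟶ w, θ.act g (θ.act (τ z) bx * e (Groupoid.inv g)) := by
    refine Finset.sum_eq_single_of_mem z (Finset.mem_univ z) ?_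
    intro y _ hne
    refine Finset.sum_eq_zero fun w _ => Finset.sum_eq_zero fun g _ => ?_
    exact hvanish y w g hne
  have hEq : ∀ w : G, (∑ h : x ⟶ x, θ.act (τ w) (θ.act h (bx * e (Groupoid.inv h))))
      = ∑ g : z ⟶ w, θ.act g (θ.act (τ z) bx * e (Groupoid.inv g)) := by
    intro w
    refine Fintype.sum_equiv
      ⟨fun h => Groupoid.inv (τ z) ≫ h ≫ τ w, fun g => τ z ≫ g ≫ Groupoid.inv (τ w),
        by intro h; simp, by intro g; simp⟩ _ _ fun h => ?_
    simp only [Equiv.coe_fn_mk]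
    exact (key w h).symm
  have hsum2 : ∀ y : G, θ.act (τ y) (∑ h : x ⟶ x, θ.act h (bx * e (Groupoid.inv h)))
      = ∑ h : x ⟶ x, θ.act (τ y) (θ.act h (bx * e (Groupoid.inv h))) := by
    intro y
    refine pa_act_sum θ Finset.univ _ (τ y) fun h _ => ?_
    rw [hgt1]
    exact hDsub _ (θ.act_mem h _ (hmem_of_e _ bx))
  calc (∑ y : G, ∑ w : G, ∑ g : y ⟶ w,
        θ.act g (θ.act (τ z) bx * e (Groupoid.inv g)))
      = ∑ w : G, ∑ g : z ⟶ w, θ.act g (θ.act (τ z) bx * e (Groupoid.inv g)) := hsum1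
    _ = ∑ w : G, ∑ h : x ⟶ x, θ.act (τ w) (θ.act h (bx * e (Groupoid.inv h))) :=
        (Finset.sum_congr rfl fun w _ => (hEq w).symm)
    _ = ∑ y : G, θ.act (τ y) (∑ h : x ⟶ x, θ.act h (bx * e (Groupoid.inv h))) :=
        (Finset.sum_congr rfl fun y _ => (hsum2 y).symm)
end

section
/- Let R = A ⋆_θ 𝒢 be the partial skew groupoid ring of a unital partial action θ = Ext(γ) of a connected finite groupoid 𝒢 on A, and S = B_x ⋆_{θ_{(x)}} 𝒢(x) the partial skew group ring, embedded in R via 1_S = 1_x δ_x. Then: (i) R·1_S = ⊕_{s(g)=x} B_g δ_g; (ii) 1_S·R = ⊕_{t(g)=x} B_g δ_g; (iii) 1_S R 1_S = S and R 1_S R = R. Consequently R and S are Morita equivalent via the context (R, S, R1_S, 1_S R) with maps given by multiplication. -/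
open CategoryTheory

universe u v

/-- The set of morphisms of a groupoid `G`, as a sigma type. -/
abbrev Mor (G : Type v) [Groupoid G] := Σ y z : G, y ⟶ z

/-- An element of the partial skew groupoid ring `A ⋆_θ 𝒢`: a function assigning to
each morphism `g` its coefficient, required (in `skewSet`) to lie in `B_g`. -/
def skewSet {G : Type v} [Groupoid G] {A : Type u} [NonUnitalRing A]
    (θ : PartialAction G A) : Set (Mor G → A) :=
  {r | ∀ p : Mor G, r p ∈ θ.D p.2.2}

/-- Convolution product of the partial skew groupoid ring `A ⋆_θ 𝒢`:
`(Σ b_g δ_g)(Σ b'_h δ_h)` where `(b_g δ_g)(b'_h δ_h) = b_g θ_g(b'_h 1_{g⁻¹}) δ_{gh}`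
for composable `g, h` (here `gh = h ≫ g`) and `0` otherwise. -/
def skewMul {G : Type v} [Groupoid G] {A : Type u} [NonUnitalRing A]
    [Fintype G] [∀ y z : G, Fintype (y ⟶ z)] [∀ y z : G, DecidableEq (y ⟶ z)]
    (θ : PartialAction G A) (e : ∀ {y z : G}, (y ⟶ z) → A)
    (r s : Mor G → A) : Mor G → A :=
  fun p => ∑ w : G, ∑ g1 : w ⟶ p.2.1, ∑ g2 : p.1 ⟶ w,
    if g2 ≫ g1 = p.2.2 then
      r ⟨w, p.2.1, g1⟩ * θ.act g1 (s ⟨p.1, w, g2⟩ * e (Groupoid.inv g1))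
    else 0

/-- The identity `1_S = 1_x δ_x` of the partial skew group ring
`S = B_x ⋆_{θ_{(x)}} 𝒢(x)`, viewed inside `R = A ⋆_θ 𝒢`. -/
def oneS {G : Type v} [Groupoid G] {A : Type u} [NonUnitalRing A]
    [DecidableEq G] [∀ y z : G, DecidableEq (y ⟶ z)]
    (e : ∀ {y z : G}, (y ⟶ z) → A) (x : G) : Mor G → A :=
  fun p => if p = (⟨x, x, 𝟙 x⟩ : Mor G) then e (𝟙 x) else 0

/-!
STATEMENT 15: R = A ⋆_θ 𝒢 the partial skew groupoid ring of the unital partial action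
θ = Ext(γ) of the connected finite groupoid 𝒢 on A = ⊕_y B_y, S = B_x ⋆_{θ_{(x)}} 𝒢(x)
embedded in R via 1_S = 1_x δ_x.  Then:
(i)  R·1_S  consists exactly of the elements of R supported on morphisms with source x;
(ii) 1_S·R  consists exactly of the elements of R supported on morphisms with target x;
(iii) 1_S R 1_S = S (the elements supported on 𝒢(x)) and R 1_S R = R (every element of
R is a finite sum of products r·1_S·r').  Consequently R and S are Morita equivalent
via the context (R, S, R1_S, 1_S R) with maps given by multiplication — the
surjectivity of those maps being precisely (iii).
-/
namespace SkewAux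

variable {G : Type v} [Groupoid G] {A : Type u} [NonUnitalRing A]

lemma zero_mem (θ : PartialAction G A) {y z : G} (g : y ⟶ z) : (0 : A) ∈ θ.D g :=
  (θ.ideal_dom g).2.1

lemma act_zero (θ : PartialAction G A) {y z : G} (g : y ⟶ z) : θ.act g 0 = 0 := by
  have h0 := zero_mem θ (Groupoid.inv g)
  have h := θ.act_add g 0 h0 0 h0
  rw [add_zero] at h
  nth_rewrite 1 [← add_zero (θ.act g 0)] at h
  exact (add_left_cancel h).symm

lemma e_mem (θ : PartialAction G A) (e : ∀ {y z : G}, (y ⟶ z) → A)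
    (hDe : ∀ {y z : G} (g : y ⟶ z), θ.D g = {a : A | ∃ b : A, a = b * e g})
    (he_idem : ∀ {y z : G} (g : y ⟶ z), e g * e g = e g)
    {y z : G} (g : y ⟶ z) : e g ∈ θ.D g := by
  rw [hDe]; exact ⟨e g, (he_idem g).symm⟩

lemma mul_e (θ : PartialAction G A) (e : ∀ {y z : G}, (y ⟶ z) → A)
    (hDe : ∀ {y z : G} (g : y ⟶ z), θ.D g = {a : A | ∃ b : A, a = b * e g})
    (he_idem : ∀ {y z : G} (g : y ⟶ z), e g * e g = e g)
    {y z : G} (g : y ⟶ z) {a : A} (ha : a ∈ θ.D g) : a * e g = a := by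
  rw [hDe] at ha
  obtain ⟨b, rfl⟩ := ha
  rw [mul_assoc, he_idem]

lemma e_mul (θ : PartialAction G A) (e : ∀ {y z : G}, (y ⟶ z) → A)
    (hDe : ∀ {y z : G} (g : y ⟶ z), θ.D g = {a : A | ∃ b : A, a = b * e g})
    (he_idem : ∀ {y z : G} (g : y ⟶ z), e g * e g = e g)
    (he_cent : ∀ {y z : G} (g : y ⟶ z) (b : A), e g * b = b * e g)
    {y z : G} (g : y ⟶ z) {a : A} (ha : a ∈ θ.D g) : e g * a = a := by
  rw [he_cent, mul_e θ e hDe he_idem g ha]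

lemma act_e (θ : PartialAction G A) (e : ∀ {y z : G}, (y ⟶ z) → A)
    (hDe : ∀ {y z : G} (g : y ⟶ z), θ.D g = {a : A | ∃ b : A, a = b * e g})
    (he_idem : ∀ {y z : G} (g : y ⟶ z), e g * e g = e g)
    (he_cent : ∀ {y z : G} (g : y ⟶ z) (b : A), e g * b = b * e g)
    {y z : G} (g : y ⟶ z) : θ.act g (e (Groupoid.inv g)) = e g := by
  obtain ⟨a, haD, hae⟩ := θ.act_surj g (e g) (e_mem θ e hDe he_idem g)
  have h1 : e (Groupoid.inv g) * a = a := e_mul θ e hDe he_idem he_cent _ haD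
  have h2 := θ.act_mul g _ (e_mem θ e hDe he_idem (Groupoid.inv g)) a haD
  rw [h1, hae] at h2
  have h3 := mul_e θ e hDe he_idem g (θ.act_mem g _ (e_mem θ e hDe he_idem (Groupoid.inv g)))
  exact (h2.trans h3).symm

end SkewAux

namespace SkewAux

variable {G : Type v} [Groupoid G] {A : Type u} [NonUnitalRing A]
variable [Fintype G] [∀ y z : G, Fintype (y ⟶ z)]
variable [DecidableEq G] [∀ y z : G, DecidableEq (y ⟶ z)]

/-- A "single" element `a δ_q` of the skew groupoid ring. -/
def single (q : Mor G) (a : A) : Mor G → A := fun p => if p = q then a else 0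

lemma single_mem (θ : PartialAction G A) {q : Mor G} {a : A} (ha : a ∈ θ.D q.2.2) :
    single q a ∈ skewSet θ := by
  intro p
  by_cases h : p = q
  · subst h; simpa [single] using ha
  · simp only [single, if_neg h]; exact zero_mem θ _

lemma oneS_eq_single (e : ∀ {y z : G}, (y ⟶ z) → A) (x : G) :
    oneS e x = single (⟨x, x, 𝟙 x⟩ : Mor G) (e (𝟙 x)) := rfl

lemma mul_oneS (θ : PartialAction G A) (e : ∀ {y z : G}, (y ⟶ z) → A)
    (hDe : ∀ {y z : G} (g : y ⟶ z), θ.D g = {a : A | ∃ b : A, a = b * e g})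
    (he_idem : ∀ {y z : G} (g : y ⟶ z), e g * e g = e g)
    (he_cent : ∀ {y z : G} (g : y ⟶ z) (b : A), e g * b = b * e g)
    (x : G) (r : Mor G → A) (hr : r ∈ skewSet θ) :
    skewMul θ e r (oneS e x) = fun p => if p.1 = x then r p else 0 := by
  funext p
  obtain ⟨y, z, g⟩ := p
  simp only [skewMul, oneS]
  by_cases hy : y = x
  · subst hy
    conv_rhs => rw [if_pos rfl]
    trans (∑ g1 : y ⟶ z, ∑ g2 : y ⟶ y,
        if g2 ≫ g1 = g then
          r ⟨y, z, g1⟩ * θ.act g1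
            ((if (⟨y, y, g2⟩ : Mor G) = (⟨y, y, 𝟙 y⟩ : Mor G) then e (𝟙 y) else 0) *
              e (Groupoid.inv g1))
        else 0)
    · refine Fintype.sum_eq_single y fun w hw => ?_
      refine Finset.sum_eq_zero fun g1 _ => Finset.sum_eq_zero fun g2 _ => ?_
      have hne : (⟨y, w, g2⟩ : Mor G) ≠ (⟨y, y, 𝟙 y⟩ : Mor G) :=
        fun h => hw (congrArg (fun q : Mor G => q.2.1) h)
      rw [if_neg hne, zero_mul, act_zero θ, mul_zero, ite_self]
    trans (∑ g1 : y ⟶ z,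
        if 𝟙 y ≫ g1 = g then r ⟨y, z, g1⟩ * θ.act g1 (e (𝟙 y) * e (Groupoid.inv g1)) else 0)
    · refine Finset.sum_congr rfl fun g1 _ => ?_
      trans (if 𝟙 y ≫ g1 = g then
          r ⟨y, z, g1⟩ * θ.act g1
            ((if (⟨y, y, 𝟙 y⟩ : Mor G) = (⟨y, y, 𝟙 y⟩ : Mor G) then e (𝟙 y) else 0) *
              e (Groupoid.inv g1))
        else 0)
      · refine Fintype.sum_eq_single (𝟙 y) fun g2 hg2 => ?_
        have hne : (⟨y, y, g2⟩ : Mor G) ≠ (⟨y, y, 𝟙 y⟩ : Mor G) := by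
          simp only [ne_eq, Sigma.mk.inj_iff, heq_eq_eq, eq_self_iff_true, true_and]
          exact hg2
        rw [if_neg hne, zero_mul, act_zero θ, mul_zero, ite_self]
      · rw [if_pos rfl]
    trans (if 𝟙 y ≫ g = g then r ⟨y, z, g⟩ * θ.act g (e (𝟙 y) * e (Groupoid.inv g)) else 0)
    · refine Fintype.sum_eq_single g fun g1 hg1 => ?_
      exact if_neg fun h => hg1 (by rwa [Category.id_comp] at h)
    rw [if_pos (Category.id_comp g)]
    have h1 : e (𝟙 y) * e (Groupoid.inv g) = e (Groupoid.inv g) :=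
      e_mul θ e hDe he_idem he_cent (𝟙 y)
        ((θ.ideal_dom (Groupoid.inv g)).1 (e_mem θ e hDe he_idem (Groupoid.inv g)))
    rw [h1, act_e θ e hDe he_idem he_cent g, mul_e θ e hDe he_idem g (hr ⟨y, z, g⟩)]
  · rw [if_neg hy]
    refine Finset.sum_eq_zero fun w _ => Finset.sum_eq_zero fun g1 _ =>
      Finset.sum_eq_zero fun g2 _ => ?_
    have hne : (⟨y, w, g2⟩ : Mor G) ≠ (⟨x, x, 𝟙 x⟩ : Mor G) :=
      fun h => hy (congrArg (fun q : Mor G => q.1) h)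
    rw [if_neg hne, zero_mul, act_zero θ, mul_zero, ite_self]

lemma oneS_mul (θ : PartialAction G A) (e : ∀ {y z : G}, (y ⟶ z) → A)
    (hDe : ∀ {y z : G} (g : y ⟶ z), θ.D g = {a : A | ∃ b : A, a = b * e g})
    (he_idem : ∀ {y z : G} (g : y ⟶ z), e g * e g = e g)
    (he_cent : ∀ {y z : G} (g : y ⟶ z) (b : A), e g * b = b * e g)
    (x : G) (r : Mor G → A) (hr : r ∈ skewSet θ) :
    skewMul θ e (oneS e x) r = fun p => if p.2.1 = x then r p else 0 := by
  funext p
  obtain ⟨y, z, g⟩ := p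
  simp only [skewMul, oneS]
  by_cases hz : z = x
  · subst hz
    conv_rhs => rw [if_pos rfl]
    trans (∑ g1 : z ⟶ z, ∑ g2 : y ⟶ z,
        if g2 ≫ g1 = g then
          (if (⟨z, z, g1⟩ : Mor G) = (⟨z, z, 𝟙 z⟩ : Mor G) then e (𝟙 z) else 0) *
            θ.act g1 (r ⟨y, z, g2⟩ * e (Groupoid.inv g1))
        else 0)
    · refine Fintype.sum_eq_single z fun w hw => ?_
      refine Finset.sum_eq_zero fun g1 _ => Finset.sum_eq_zero fun g2 _ => ?_
      have hne : (⟨w, z, g1⟩ : Mor G) ≠ (⟨z, z, 𝟙 z⟩ : Mor G) :=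
        fun h => hw (congrArg (fun q : Mor G => q.1) h)
      rw [if_neg hne, zero_mul, ite_self]
    trans (∑ g2 : y ⟶ z,
        if g2 ≫ 𝟙 z = g then
          (if (⟨z, z, 𝟙 z⟩ : Mor G) = (⟨z, z, 𝟙 z⟩ : Mor G) then e (𝟙 z) else 0) *
            θ.act (𝟙 z) (r ⟨y, z, g2⟩ * e (Groupoid.inv (𝟙 z)))
        else 0)
    · refine Fintype.sum_eq_single (𝟙 z) fun g1 hg1 => Finset.sum_eq_zero fun g2 _ => ?_
      have hne : (⟨z, z, g1⟩ : Mor G) ≠ (⟨z, z, 𝟙 z⟩ : Mor G) := by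
        simp only [ne_eq, Sigma.mk.inj_iff, heq_eq_eq, eq_self_iff_true, true_and]
        exact hg1
      rw [if_neg hne, zero_mul, ite_self]
    trans (if g ≫ 𝟙 z = g then
        (if (⟨z, z, 𝟙 z⟩ : Mor G) = (⟨z, z, 𝟙 z⟩ : Mor G) then e (𝟙 z) else 0) *
          θ.act (𝟙 z) (r ⟨y, z, g⟩ * e (Groupoid.inv (𝟙 z)))
      else 0)
    · refine Fintype.sum_eq_single g fun g2 hg2 => ?_
      exact if_neg fun h => hg2 (by rwa [Category.comp_id] at h)
    rw [if_pos (Category.comp_id g), if_pos rfl]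
    have hinv : Groupoid.inv (𝟙 z) = 𝟙 z := by simp
    rw [hinv]
    have hrz : r ⟨y, z, g⟩ ∈ θ.D (𝟙 z) := (θ.ideal_dom g).1 (hr ⟨y, z, g⟩)
    rw [mul_e θ e hDe he_idem (𝟙 z) hrz, θ.act_id z _ hrz,
      e_mul θ e hDe he_idem he_cent (𝟙 z) hrz]
  · rw [if_neg hz]
    refine Finset.sum_eq_zero fun w _ => Finset.sum_eq_zero fun g1 _ =>
      Finset.sum_eq_zero fun g2 _ => ?_
    have hne : (⟨w, z, g1⟩ : Mor G) ≠ (⟨x, x, 𝟙 x⟩ : Mor G) :=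
      fun h => hz (congrArg (fun q : Mor G => q.2.1) h)
    rw [if_neg hne, zero_mul, ite_self]

lemma skewMul_single_single (θ : PartialAction G A) (e : ∀ {y z : G}, (y ⟶ z) → A)
    (w y z : G) (g1 : w ⟶ z) (g2 : y ⟶ w) (a c : A) :
    skewMul θ e (single ⟨w, z, g1⟩ a) (single ⟨y, w, g2⟩ c)
      = single ⟨y, z, g2 ≫ g1⟩ (a * θ.act g1 (c * e (Groupoid.inv g1))) := by
  funext p
  obtain ⟨y', z', g'⟩ := p
  simp only [skewMul, single]
  by_cases hz : z' = z
  · subst hz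
    by_cases hy : y' = y
    · subst hy
      trans (∑ h1 : w ⟶ z', ∑ h2 : y' ⟶ w,
          if h2 ≫ h1 = g' then
            (if (⟨w, z', h1⟩ : Mor G) = (⟨w, z', g1⟩ : Mor G) then a else 0) *
              θ.act h1 ((if (⟨y', w, h2⟩ : Mor G) = (⟨y', w, g2⟩ : Mor G) then c else 0) *
                e (Groupoid.inv h1))
          else 0)
      · refine Fintype.sum_eq_single w fun w' hw => ?_
        refine Finset.sum_eq_zero fun h1 _ => Finset.sum_eq_zero fun h2 _ => ?_
        have hne : (⟨w', z', h1⟩ : Mor G) ≠ (⟨w, z', g1⟩ : Mor G) :=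
          fun h => hw (congrArg (fun q : Mor G => q.1) h)
        rw [if_neg hne, zero_mul, ite_self]
      trans (∑ h2 : y' ⟶ w,
          if h2 ≫ g1 = g' then
            (if (⟨w, z', g1⟩ : Mor G) = (⟨w, z', g1⟩ : Mor G) then a else 0) *
              θ.act g1 ((if (⟨y', w, h2⟩ : Mor G) = (⟨y', w, g2⟩ : Mor G) then c else 0) *
                e (Groupoid.inv g1))
          else 0)
      · refine Fintype.sum_eq_single g1 fun h1 hh1 => Finset.sum_eq_zero fun h2 _ => ?_
        have hne : (⟨w, z', h1⟩ : Mor G) ≠ (⟨w, z', g1⟩ : Mor G) := by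
          simp only [ne_eq, Sigma.mk.inj_iff, heq_eq_eq, eq_self_iff_true, true_and]
          exact hh1
        rw [if_neg hne, zero_mul, ite_self]
      trans (if g2 ≫ g1 = g' then
          (if (⟨w, z', g1⟩ : Mor G) = (⟨w, z', g1⟩ : Mor G) then a else 0) *
            θ.act g1 ((if (⟨y', w, g2⟩ : Mor G) = (⟨y', w, g2⟩ : Mor G) then c else 0) *
              e (Groupoid.inv g1))
        else 0)
      · refine Fintype.sum_eq_single g2 fun h2 hh2 => ?_
        have hne : (⟨y', w, h2⟩ : Mor G) ≠ (⟨y', w, g2⟩ : Mor G) := by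
          simp only [ne_eq, Sigma.mk.inj_iff, heq_eq_eq, eq_self_iff_true, true_and]
          exact hh2
        rw [if_neg hne, zero_mul, act_zero θ, mul_zero, ite_self]
      rw [if_pos rfl, if_pos rfl]
      by_cases hg : g' = g2 ≫ g1
      · subst hg
        rw [if_pos rfl, if_pos rfl]
      · rw [if_neg fun h => hg h.symm,
          if_neg (show (⟨y', z', g'⟩ : Mor G) ≠ (⟨y', z', g2 ≫ g1⟩ : Mor G) by
            simp only [ne_eq, Sigma.mk.inj_iff, heq_eq_eq, eq_self_iff_true, true_and]
            exact hg)]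
    · rw [if_neg (show (⟨y', z', g'⟩ : Mor G) ≠ (⟨y, z', g2 ≫ g1⟩ : Mor G) from
        fun h => hy (congrArg (fun q : Mor G => q.1) h))]
      refine Finset.sum_eq_zero fun w' _ => Finset.sum_eq_zero fun h1 _ =>
        Finset.sum_eq_zero fun h2 _ => ?_
      have hne : (⟨y', w', h2⟩ : Mor G) ≠ (⟨y, w, g2⟩ : Mor G) :=
        fun h => hy (congrArg (fun q : Mor G => q.1) h)
      rw [if_neg hne, zero_mul, act_zero θ, mul_zero, ite_self]
  · rw [if_neg (show (⟨y', z', g'⟩ : Mor G) ≠ (⟨y, z, g2 ≫ g1⟩ : Mor G) from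
      fun h => hz (congrArg (fun q : Mor G => q.2.1) h))]
    refine Finset.sum_eq_zero fun w' _ => Finset.sum_eq_zero fun h1 _ =>
      Finset.sum_eq_zero fun h2 _ => ?_
    have hne : (⟨w', z', h1⟩ : Mor G) ≠ (⟨w, z, g1⟩ : Mor G) :=
      fun h => hz (congrArg (fun q : Mor G => q.2.1) h)
    rw [if_neg hne, zero_mul, ite_self]

end SkewAux

theorem extension_partial_actions_stmt15
    {G : Type v} [Groupoid G] {A : Type u} [NonUnitalRing A]
    [Fintype G] [∀ y z : G, Fintype (y ⟶ z)]
    [DecidableEq G] [∀ y z : G, DecidableEq (y ⟶ z)]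
    (hconn : ∀ a b : G, Nonempty (a ⟶ b))
    (x : G) (τ : ∀ y : G, x ⟶ y) (hτx : τ x = 𝟙 x)
    (θ : PartialAction G A)
    (e : ∀ {y z : G}, (y ⟶ z) → A)
    (he_idem : ∀ {y z : G} (g : y ⟶ z), e g * e g = e g)
    (he_cent : ∀ {y z : G} (g : y ⟶ z) (b : A), e g * b = b * e g)
    (hDe : ∀ {y z : G} (g : y ⟶ z), θ.D g = {a : A | ∃ b : A, a = b * e g})
    (hgt1 : ∀ y : G, θ.D (Groupoid.inv (τ y)) = θ.D (𝟙 x))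
    (hgt2 : ∀ y : G, θ.D (τ y) = θ.D (𝟙 y))
    (horth : ∀ y z : G, y ≠ z → ∀ a ∈ θ.D (𝟙 y), ∀ b ∈ θ.D (𝟙 z), a * b = 0)
    (hspan : ∀ a : A, ∃ f : G → A, (∀ y : G, f y ∈ θ.D (𝟙 y)) ∧ a = ∑ y : G, f y) :
    ({t | ∃ r ∈ skewSet θ, t = skewMul θ e r (oneS e x)}
        = {r ∈ skewSet θ | ∀ p : Mor G, p.1 ≠ x → r p = 0}) ∧
    ({t | ∃ r ∈ skewSet θ, t = skewMul θ e (oneS e x) r}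
        = {r ∈ skewSet θ | ∀ p : Mor G, p.2.1 ≠ x → r p = 0}) ∧
    ({t | ∃ r ∈ skewSet θ, t = skewMul θ e (oneS e x) (skewMul θ e r (oneS e x))}
        = {r ∈ skewSet θ | ∀ p : Mor G, (p.1 ≠ x ∨ p.2.1 ≠ x) → r p = 0}) ∧
    (∀ r ∈ skewSet θ, ∃ (n : ℕ) (u v : Fin n → (Mor G → A)),
      (∀ i, u i ∈ skewSet θ ∧ v i ∈ skewSet θ) ∧
      r = ∑ i, skewMul θ e (u i) (skewMul θ e (oneS e x) (v i))) := by
  have hmulr : ∀ r ∈ skewSet θ,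
      skewMul θ e r (oneS e x) = fun p => if p.1 = x then r p else 0 :=
    fun r hr => SkewAux.mul_oneS θ e hDe he_idem he_cent x r hr
  have hmull : ∀ r ∈ skewSet θ,
      skewMul θ e (oneS e x) r = fun p => if p.2.1 = x then r p else 0 :=
    fun r hr => SkewAux.oneS_mul θ e hDe he_idem he_cent x r hr
  have hmemr : ∀ r : Mor G → A, r ∈ skewSet θ →
      (fun p : Mor G => if p.1 = x then r p else 0) ∈ skewSet θ := by
    intro r hr p
    have : (if p.1 = x then r p else 0) ∈ θ.D p.2.2 := by
      split_ifs
      · exact hr p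
      · exact SkewAux.zero_mem θ _
    exact this
  have hmeml : ∀ r : Mor G → A, r ∈ skewSet θ →
      (fun p : Mor G => if p.2.1 = x then r p else 0) ∈ skewSet θ := by
    intro r hr p
    have : (if p.2.1 = x then r p else 0) ∈ θ.D p.2.2 := by
      split_ifs
      · exact hr p
      · exact SkewAux.zero_mem θ _
    exact this
  refine ⟨?_, ?_, ?_, ?_⟩
  · -- (i)
    ext t
    constructor
    · rintro ⟨r, hr, rfl⟩
      rw [hmulr r hr]
      exact ⟨hmemr r hr, fun p hp => if_neg hp⟩
    · rintro ⟨ht, hsupp⟩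
      refine ⟨t, ht, ?_⟩
      rw [hmulr t ht]
      funext p
      by_cases h : p.1 = x
      · exact (if_pos h).symm
      · exact (hsupp p h).trans (if_neg h).symm
  · -- (ii)
    ext t
    constructor
    · rintro ⟨r, hr, rfl⟩
      rw [hmull r hr]
      exact ⟨hmeml r hr, fun p hp => if_neg hp⟩
    · rintro ⟨ht, hsupp⟩
      refine ⟨t, ht, ?_⟩
      rw [hmull t ht]
      funext p
      by_cases h : p.2.1 = x
      · exact (if_pos h).symm
      · exact (hsupp p h).trans (if_neg h).symm
  · -- (iii) first part
    ext t
    constructor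
    · rintro ⟨r, hr, rfl⟩
      rw [hmulr r hr, hmull _ (hmemr r hr)]
      refine ⟨?_, ?_⟩
      · intro p
        have : (if p.2.1 = x then (if p.1 = x then r p else 0) else 0) ∈ θ.D p.2.2 := by
          split_ifs
          · exact hr p
          · exact SkewAux.zero_mem θ _
          · exact SkewAux.zero_mem θ _
        exact this
      · intro p hp
        show (if p.2.1 = x then (if p.1 = x then r p else 0) else 0) = 0
        rcases hp with hp | hp
        · by_cases h : p.2.1 = x
          · rw [if_pos h, if_neg hp]
          · rw [if_neg h]
        · rw [if_neg hp]
    · rintro ⟨ht, hsupp⟩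
      refine ⟨t, ht, ?_⟩
      rw [hmulr t ht, hmull _ (hmemr t ht)]
      funext p
      show t p = (if p.2.1 = x then (if p.1 = x then t p else 0) else 0)
      by_cases h1 : p.2.1 = x
      · rw [if_pos h1]
        by_cases h0 : p.1 = x
        · rw [if_pos h0]
        · rw [if_neg h0]
          exact hsupp p (Or.inl h0)
      · rw [if_neg h1]
        exact hsupp p (Or.inr h1)
  · -- (iv)
    intro r hr
    have hinvinv : ∀ {y z : G} (k : y ⟶ z), Groupoid.inv (Groupoid.inv k) = k := by
      intros; simp
    have hrq : ∀ q : Mor G, r q ∈ θ.D (τ q.2.1) := fun q => by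
      rw [hgt2]
      exact (θ.ideal_dom q.2.2).1 (hr q)
    have hrq' : ∀ q : Mor G, r q ∈ θ.D (𝟙 q.2.1) := fun q => by
      rw [← hgt2]
      exact hrq q
    have hc_mem : ∀ q : Mor G,
        θ.act (Groupoid.inv (τ q.2.1)) (r q) ∈ θ.D (Groupoid.inv (τ q.2.1)) := fun q =>
      θ.act_mem _ _ (by rw [hinvinv]; exact hrq q)
    have hact_back : ∀ q : Mor G,
        θ.act (τ q.2.1) (θ.act (Groupoid.inv (τ q.2.1)) (r q)) = r q := fun q => by
      have h := θ.act_comp (τ q.2.1) (Groupoid.inv (τ q.2.1)) (r q)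
        (by rw [hinvinv]; exact hrq q) ⟨hc_mem q, hc_mem q⟩
      rw [Groupoid.inv_comp] at h
      rw [h, θ.act_id _ _ (hrq' q)]
    have hUmem : ∀ q : Mor G,
        SkewAux.single (⟨x, q.2.1, τ q.2.1⟩ : Mor G) (e (τ q.2.1)) ∈ skewSet θ := fun q =>
      SkewAux.single_mem θ (SkewAux.e_mem θ e hDe he_idem (τ q.2.1))
    have hVmem : ∀ q : Mor G,
        SkewAux.single (⟨q.1, x, q.2.2 ≫ Groupoid.inv (τ q.2.1)⟩ : Mor G)
          (θ.act (Groupoid.inv (τ q.2.1)) (r q)) ∈ skewSet θ := by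
      intro q
      refine SkewAux.single_mem θ ?_
      show θ.act (Groupoid.inv (τ q.2.1)) (r q) ∈ θ.D (q.2.2 ≫ Groupoid.inv (τ q.2.1))
      have hm1 : θ.act (τ q.2.1) (θ.act (Groupoid.inv (τ q.2.1)) (r q))
          ∈ θ.D (Groupoid.inv (Groupoid.inv q.2.2)) := by
        rw [hact_back q, hinvinv]
        exact hr q
      have hm2 : θ.act (τ q.2.1) (θ.act (Groupoid.inv (τ q.2.1)) (r q)) ∈ θ.D (τ q.2.1) := by
        rw [hact_back q]
        exact hrq q
      have h := θ.mem_comp (Groupoid.inv q.2.2) (τ q.2.1)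
        (θ.act (Groupoid.inv (τ q.2.1)) (r q)) (hc_mem q) ⟨hm1, hm2⟩
      have heq : Groupoid.inv (τ q.2.1 ≫ Groupoid.inv q.2.2)
          = q.2.2 ≫ Groupoid.inv (τ q.2.1) := by
        simp [Groupoid.inv_eq_inv]
      rwa [heq] at h
    have hprod : ∀ q : Mor G,
        skewMul θ e (SkewAux.single (⟨x, q.2.1, τ q.2.1⟩ : Mor G) (e (τ q.2.1)))
          (skewMul θ e (oneS e x)
            (SkewAux.single (⟨q.1, x, q.2.2 ≫ Groupoid.inv (τ q.2.1)⟩ : Mor G)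
              (θ.act (Groupoid.inv (τ q.2.1)) (r q))))
        = SkewAux.single q (r q) := by
      intro q
      have hVs : skewMul θ e (oneS e x)
          (SkewAux.single (⟨q.1, x, q.2.2 ≫ Groupoid.inv (τ q.2.1)⟩ : Mor G)
            (θ.act (Groupoid.inv (τ q.2.1)) (r q)))
          = SkewAux.single (⟨q.1, x, q.2.2 ≫ Groupoid.inv (τ q.2.1)⟩ : Mor G)
            (θ.act (Groupoid.inv (τ q.2.1)) (r q)) := by
        rw [hmull _ (hVmem q)]
        funext p
        show (if p.2.1 = x then _ else 0) = _
        by_cases h : p.2.1 = x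
        · rw [if_pos h]
        · rw [if_neg h]
          refine (if_neg fun hp => h ?_).symm
          exact congrArg (fun m : Mor G => m.2.1) hp
      rw [hVs, SkewAux.skewMul_single_single θ e x q.1 q.2.1 (τ q.2.1)
        (q.2.2 ≫ Groupoid.inv (τ q.2.1)) (e (τ q.2.1))
        (θ.act (Groupoid.inv (τ q.2.1)) (r q))]
      have hk : (q.2.2 ≫ Groupoid.inv (τ q.2.1)) ≫ τ q.2.1 = q.2.2 := by
        rw [Category.assoc, Groupoid.inv_comp, Category.comp_id]
      rw [hk]
      have hc1 : θ.act (Groupoid.inv (τ q.2.1)) (r q) * e (Groupoid.inv (τ q.2.1))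
          = θ.act (Groupoid.inv (τ q.2.1)) (r q) :=
        SkewAux.mul_e θ e hDe he_idem _ (hc_mem q)
      rw [hc1, hact_back q, SkewAux.e_mul θ e hDe he_idem he_cent _ (hrq q)]
    refine ⟨Fintype.card (Mor G),
      fun i => SkewAux.single
        (⟨x, ((Fintype.equivFin (Mor G)).symm i).2.1, τ ((Fintype.equivFin (Mor G)).symm i).2.1⟩ : Mor G)
        (e (τ ((Fintype.equivFin (Mor G)).symm i).2.1)),
      fun i => SkewAux.single
        (⟨((Fintype.equivFin (Mor G)).symm i).1, x,
          ((Fintype.equivFin (Mor G)).symm i).2.2 ≫ Groupoid.inv (τ ((Fintype.equivFin (Mor G)).symm i).2.1)⟩ : Mor G)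
        (θ.act (Groupoid.inv (τ ((Fintype.equivFin (Mor G)).symm i).2.1))
          (r ((Fintype.equivFin (Mor G)).symm i))),
      fun i => ⟨hUmem _, hVmem _⟩, ?_⟩
    calc r = ∑ q : Mor G, SkewAux.single q (r q) := by
            funext p
            rw [Finset.sum_apply]
            simp only [SkewAux.single]
            rw [Fintype.sum_eq_single p fun q hq => if_neg fun h => hq h.symm, if_pos rfl]
      _ = ∑ i : Fin (Fintype.card (Mor G)),
            SkewAux.single ((Fintype.equivFin (Mor G)).symm i)
              (r ((Fintype.equivFin (Mor G)).symm i)) :=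
          (Equiv.sum_comp (Fintype.equivFin (Mor G)).symm
            (fun q => SkewAux.single q (r q))).symm
      _ = _ := Finset.sum_congr rfl fun i _ => (hprod ((Fintype.equivFin (Mor G)).symm i)).symm
end
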